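/- arXiv:0804.1243 — 11 statements merged into one kernel-verified Lean document; each statement's English description precedes it below -/
import Mathlib

section
/- Let A ∈ SU(H) be such that its characteristic polynomial over L equals its minimal polynomial. Suppose A = A_1 A_2 with A_1, A_2 ∈ GL(n, L) satisfying Ā_1 A_1 = I = Ā_2 A_2. Then A_1 and A_2 belong to U(H). -/
open Matrix Polynomial

/-!
Since `Ā₁ = A₁⁻¹` and `Ā₂ = A₂⁻¹`, the relation `ᵗA H Ā = H` turns into
`ᵗA (H Ā₁) = (H Ā₁) A`: `A` is self-adjoint for the bilinear form with matrix `G = H Ā₁`.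
A nonderogatory `A` has a cyclic vector `v`, and `G(p(A) v, q(A) v) = G(v, p(A) q(A) v)` is
symmetric in `p, q`, so `G` is symmetric. As `H` is symmetric, this says `ᵗA₁ H Ā₁ = H`, and then
`A₂ = A₁⁻¹ A` lies in `U(H)` too.
-/

namespace Module.End

variable {R M : Type*} [CommRing R] [AddCommGroup M] [Module R M]

def IsCyclicVector (f : Module.End R M) (v : M) : Prop :=
  ∀ x : M, ∃ p : R[X], aeval f p v = x

variable {K V : Type*} [Field K] [AddCommGroup V] [Module K V] [FiniteDimensional K V]

theorem exists_aeval_apply_eq_zero_imp_aeval_eq_zero (f : Module.End K V) :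
    ∃ v : V, ∀ p : K[X], aeval f p v = 0 → aeval f p = 0 := by
  obtain ⟨x, hx⟩ := Module.exists_ker_toSpanSingleton_eq_annihilator (R := K[X]) (M := AEval' f)
  refine ⟨(AEval'.of f).symm x, fun p hp => ?_⟩
  have hpx : p ∈ LinearMap.ker (LinearMap.toSpanSingleton K[X] _ x) := by
    rw [LinearMap.mem_ker, LinearMap.toSpanSingleton_apply, ← (AEval'.of f).symm.map_eq_zero_iff]
    exact hp
  rwa [hx, AEval.annihilator_eq_ker_aeval] at hpx

theorem exists_isCyclicVector_of_natDegree_minpoly_eq_finrank (f : Module.End K V)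
    (hf : (minpoly K f).natDegree = Module.finrank K V) : ∃ v : V, f.IsCyclicVector v := by
  obtain ⟨v, hv⟩ := exists_aeval_apply_eq_zero_imp_aeval_eq_zero f
  let φ : degreeLT K (Module.finrank K V) →ₗ[K] V :=
    LinearMap.applyₗ v ∘ₗ (aeval f).toLinearMap ∘ₗ (degreeLT K _).subtype
  have hφ : Function.Injective φ := by
    refine (injective_iff_map_eq_zero φ).mpr fun ⟨p, hp⟩ hφp => Subtype.ext ?_
    refine eq_zero_of_dvd_of_degree_lt (minpoly.dvd K f (hv p hφp)) ?_
    rw [degree_eq_natDegree (minpoly.ne_zero (Algebra.IsIntegral.isIntegral f)), hf]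
    exact mem_degreeLT.mp hp
  have hdim : Module.finrank K (degreeLT K (Module.finrank K V)) = Module.finrank K V := by
    rw [(degreeLTEquiv K _).finrank_eq, Module.finrank_fin_fun]
  refine ⟨v, fun x => ?_⟩
  obtain ⟨⟨p, _⟩, hp⟩ := (LinearMap.injective_iff_surjective_of_finrank_eq_finrank hdim).mp hφ x
  exact ⟨p, hp⟩

end Module.End

namespace LinearMap

variable {R M : Type*} [CommRing R] [AddCommGroup M] [Module R M]
  {B : LinearMap.BilinForm R M} {f : Module.End R M}

theorem IsAdjointPair.aeval (h : IsAdjointPair B B f f) (p : R[X]) :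
    IsAdjointPair B B (aeval f p) (aeval f p) := by
  induction p using Polynomial.induction_on with
  | C a =>
    rw [aeval_C, Algebra.algebraMap_eq_smul_one]
    exact isAdjointPair_one.smul a
  | add p q hp hq =>
    rw [map_add]
    exact hp.add hq
  | monomial k a ih =>
    have hcomm : Commute (Polynomial.aeval f (C a * X ^ k)) f := by
      simpa only [aeval_X] using (Commute.all (C a * X ^ k : R[X]) X).map (Polynomial.aeval f)
    rw [pow_succ, ← mul_assoc, _root_.map_mul, aeval_X]
    nth_rw 2 [hcomm.eq]
    exact ih.mul h

theorem BilinForm.isSymm_of_isAdjointPair_of_isCyclicVector (h : IsAdjointPair B B f f) {v : M}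
    (hv : f.IsCyclicVector v) : B.IsSymm := by
  refine ⟨fun x y => ?_⟩
  obtain ⟨p, rfl⟩ := hv x
  obtain ⟨q, rfl⟩ := hv y
  rw [h.aeval p, ← Module.End.mul_apply, ← map_mul, mul_comm, map_mul, Module.End.mul_apply,
    ← h.aeval q]

end LinearMap

theorem Matrix.IsSelfAdjoint.isSymm_of_charpoly_eq_minpoly {K n : Type*} [Field K] [Fintype n]
    [DecidableEq n] {A G : Matrix n n K} (hG : G.IsSelfAdjoint A)
    (hA : A.charpoly = minpoly K A) : G.IsSymm := by
  have hdeg : (minpoly K (toLin' A)).natDegree = Module.finrank K (n → K) := by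
    rw [minpoly_toLin', ← hA, charpoly_natDegree_eq_dim, Module.finrank_fintype_fun_eq_card]
  obtain ⟨v, hv⟩ := Module.End.exists_isCyclicVector_of_natDegree_minpoly_eq_finrank _ hdeg
  rw [← isSymm_toBilin'_iff_isSymm]
  exact LinearMap.BilinForm.isSymm_of_isAdjointPair_of_isCyclicVector
    ((isAdjointPair_toLinearMap₂' G G A A).mpr hG) hv

namespace Matrix

variable {R n : Type*} [CommRing R] [Fintype n] {σ : R →+* R}
  {H M N : Matrix n n R}

-- `ᵗM H M̄ = H`, the equation defining `U(H)`.
def IsUnitaryFor (σ : R →+* R) (H M : Matrix n n R) : Prop :=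
  Mᵀ * H * M.map σ = H

theorem IsUnitaryFor.of_mul_left (hM : IsUnitaryFor σ H M) (hMN : IsUnitaryFor σ H (M * N)) :
    IsUnitaryFor σ H N := by
  calc Nᵀ * H * N.map σ = Nᵀ * (Mᵀ * H * M.map σ) * N.map σ := by rw [hM]
    _ = (M * N)ᵀ * H * (M * N).map σ := by
        rw [transpose_mul, Matrix.map_mul]
        simp only [mul_assoc]
    _ = H := hMN

theorem isSelfAdjoint_mul_map_of_isUnitaryFor_mul [DecidableEq n] (hMN : IsUnitaryFor σ H (M * N))
    (hM : M.map σ * M = 1) (hN : N.map σ * N = 1) :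
    (H * M.map σ).IsSelfAdjoint (M * N) := by
  have hM' : M * M.map σ = 1 := mul_eq_one_comm.mp hM
  have hinv : (M * N).map σ * (N * M) = 1 := by
    rw [Matrix.map_mul, mul_assoc, ← mul_assoc (N.map σ), hN, one_mul, hM]
  have hT : (M * N)ᵀ * H = H * (N * M) := by
    calc (M * N)ᵀ * H = (M * N)ᵀ * H * ((M * N).map σ * (N * M)) := by rw [hinv, mul_one]
      _ = H * (N * M) := by rw [← mul_assoc]; exact congrArg (· * (N * M)) hMN
  calc (M * N)ᵀ * (H * M.map σ) = H * N * (M * M.map σ) := by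
        rw [← mul_assoc, hT, mul_assoc H, mul_assoc H, mul_assoc N]
    _ = H * M.map σ * (M * N) := by
        rw [hM', mul_one, mul_assoc H, ← mul_assoc (M.map σ), hM, one_mul]

theorem isUnitaryFor_of_isSymm_mul_map [DecidableEq n] (hH : H.IsSymm) (hM : M.map σ * M = 1)
    (hHM : (H * M.map σ).IsSymm) : IsUnitaryFor σ H M := by
  unfold IsUnitaryFor
  rw [mul_assoc, ← hHM.eq, transpose_mul, hH.eq, ← mul_assoc, ← transpose_mul, hM,
    transpose_one, one_mul]

end Matrix

theorem stmt1_general {k L : Type*} [Field k] [Field L] [Algebra k L]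
    (σ : L ≃ₐ[k] L) {n : ℕ} (lam : Fin n → k) (H : Matrix (Fin n) (Fin n) L)
    (hH : H = Matrix.diagonal fun i => algebraMap k L (lam i))
    (A : Matrix (Fin n) (Fin n) L) (hA_U : Aᵀ * H * A.map σ = H)
    (hmin : A.charpoly = minpoly L A) (A₁ A₂ : Matrix (Fin n) (Fin n) L) (hfac : A = A₁ * A₂)
    (h₁ : (A₁.map σ) * A₁ = 1) (h₂ : (A₂.map σ) * A₂ = 1) :
    A₁ᵀ * H * A₁.map σ = H ∧ A₂ᵀ * H * A₂.map σ = H := by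
  subst hfac
  have hA : IsUnitaryFor (σ : L →+* L) H (A₁ * A₂) := hA_U
  have hH_symm : H.IsSymm := hH ▸ isSymm_diagonal _
  have hA₁ : IsUnitaryFor (σ : L →+* L) H A₁ := isUnitaryFor_of_isSymm_mul_map hH_symm h₁
    ((isSelfAdjoint_mul_map_of_isUnitaryFor_mul hA h₁ h₂).isSymm_of_charpoly_eq_minpoly hmin)
  exact ⟨hA₁, hA₁.of_mul_left hA⟩

/-- If `A ∈ SU(H)` has characteristic polynomial equal to its minimal
polynomial, and `A = A₁ A₂` with `A₁, A₂ ∈ GL(n,L)` satisfying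
`Ā₁ A₁ = I = Ā₂ A₂`, then `A₁, A₂ ∈ U(H)`. -/
theorem stmt1 {k L : Type*} [Field k] [Field L] [Algebra k L]
    (hchar : (2 : k) ≠ 0) (hquad : Module.finrank k L = 2)
    (σ : L ≃ₐ[k] L) (hσ : σ ≠ AlgEquiv.refl)
    {n : ℕ} (lam : Fin n → k) (hlam : ∀ i, lam i ≠ 0)
    (H : Matrix (Fin n) (Fin n) L)
    (hH : H = Matrix.diagonal fun i => algebraMap k L (lam i))
    (A : Matrix (Fin n) (Fin n) L) (hA_unit : IsUnit A)
    (hA_U : Aᵀ * H * A.map σ = H) (hA_det : A.det = 1)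
    (hmin : A.charpoly = minpoly L A)
    (A₁ A₂ : Matrix (Fin n) (Fin n) L) (hA₁_unit : IsUnit A₁) (hA₂_unit : IsUnit A₂)
    (hfac : A = A₁ * A₂)
    (h₁ : (A₁.map σ) * A₁ = 1) (h₂ : (A₂.map σ) * A₂ = 1) :
    A₁ᵀ * H * A₁.map σ = H ∧ A₂ᵀ * H * A₂.map σ = H :=
  stmt1_general σ lam H hH A hA_U hmin A₁ A₂ hfac h₁ h₂
end

section
/- Let A ∈ SU(H) be such that its characteristic polynomial over L equals its minimal polynomial. Then there exist B_1, B_2 ∈ GL(n, L) with A = B_1 B_2 and B̄_1 B_1 = I = B̄_2 B_2. -/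
/-!
Unitarity gives `Ā = H⁻¹ (Aᵀ)⁻¹ H`, so `Ā` is similar to `A⁻¹`; with `det A = 1` the
characteristic polynomial `f` of `A` satisfies `f̄ = (-1)ⁿ · reverse f`. As `A` is cyclic, it is
similar to the companion matrix `C` of `f`, and the symmetry of `f` says precisely that the
row-reversed companion matrix `JC` satisfies `(JC)‾ (JC) = 1`, where `J` is the antidiagonal
permutation matrix. Hence `C = J · JC` is a product of two matrices with `B̄ B = 1`, and such
products survive conjugation: `P B₁ B₂ P⁻¹ = (P B₁ P̄⁻¹) (P̄ B₂ P⁻¹)`. This last step needs `B ↦ B̄`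
to be an involution, which holds because a quadratic extension has at most two automorphisms.
-/

open Matrix Polynomial

theorem AlgEquiv.involutive_of_finrank_eq_two {k L : Type*} [Field k] [Field L] [Algebra k L]
    (hL : Module.finrank k L = 2) (σ : L ≃ₐ[k] L) : Function.Involutive σ := by
  have : FiniteDimensional k L := Module.finite_of_finrank_eq_succ hL
  have hcard : Nat.card (L ≃ₐ[k] L) ≤ 2 :=
    hL ▸ (Nat.card_le_card_of_injective _ AlgEquiv.coe_toAlgHom_injective).trans
      (card_algHom_le_finrank k L L)
  have hσ : σ ^ 2 = 1 := by
    have hpos := orderOf_pos σ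
    have hle := (Nat.le_of_dvd Nat.card_pos (orderOf_dvd_natCard σ)).trans hcard
    rw [← orderOf_dvd_iff_pow_eq_one]
    interval_cases orderOf σ <;> simp
  intro x
  simpa [sq] using DFunLike.congr_fun hσ x

section MonoidInvolution

variable {M : Type*} [Monoid M] {τ : M →* M}

theorem map_mul_self_units_mul_mul_map_inv (hτ : Function.Involutive τ) (u : Mˣ) {b : M}
    (hb : τ b * b = 1) : τ (u * b * τ ↑u⁻¹) * (u * b * τ ↑u⁻¹) = 1 :=
  calc τ (u * b * τ ↑u⁻¹) * (u * b * τ ↑u⁻¹)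
      = τ u * (τ b * (↑u⁻¹ * ↑u) * b) * τ ↑u⁻¹ := by simp only [map_mul, hτ _, mul_assoc]
    _ = 1 := by rw [Units.inv_mul, mul_one, hb, mul_one, ← map_mul, Units.mul_inv, map_one]

theorem exists_units_conj_mul_eq_mul (hτ : Function.Involutive τ) (u : Mˣ) {b₁ b₂ : M}
    (h₁ : τ b₁ * b₁ = 1) (h₂ : τ b₂ * b₂ = 1) :
    ∃ c₁ c₂ : M, u * (b₁ * b₂) * ↑u⁻¹ = c₁ * c₂ ∧ τ c₁ * c₁ = 1 ∧ τ c₂ * c₂ = 1 := by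
  set v := Units.map τ u
  have hv : τ ↑v⁻¹ = ↑u⁻¹ := by rw [Units.coe_map_inv, hτ]
  refine ⟨u * b₁ * τ ↑u⁻¹, v * b₂ * τ ↑v⁻¹, ?_, map_mul_self_units_mul_mul_map_inv hτ u h₁,
    map_mul_self_units_mul_mul_map_inv hτ v h₂⟩
  rw [hv, Units.coe_map]
  calc u * (b₁ * b₂) * ↑u⁻¹ = u * b₁ * τ (↑u⁻¹ * ↑u) * b₂ * ↑u⁻¹ := by
        rw [Units.inv_mul, map_one, mul_one]; simp only [mul_assoc]
    _ = _ := by simp only [map_mul, mul_assoc]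

end MonoidInvolution

theorem Polynomial.apply_coeff_of_map_eq_C_mul_reverse {R : Type*} [CommRing R] (σ : R →+* R)
    {p : R[X]} {c : R} (h : p.map σ = C c * p.reverse) {j : ℕ} (hj : j ≤ p.natDegree) :
    σ (p.coeff j) = c * p.coeff (p.natDegree - j) := by
  simpa [coeff_C_mul, coeff_reverse, revAt_le hj] using congr_arg (coeff · j) h

theorem Matrix.charpoly_map_of_transpose_mul_mul_map_eq {n L : Type*} [Fintype n] [DecidableEq n]
    [Field L] (σ : L →+* L) {A H : Matrix n n L} (hA : IsUnit A) (hH : IsUnit H)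
    (hAH : Aᵀ * H * A.map σ = H) :
    A.charpoly.map σ = (-1) ^ Fintype.card n * C (Ring.inverse A.det) * A.charpoly.reverse := by
  have hAσ : A.map σ = H⁻¹ * Aᵀ⁻¹ * H := by
    nth_rw 2 [← hAH]
    simp only [Matrix.mul_assoc]
    rw [nonsing_inv_mul_cancel_left _ _ (by simpa using (isUnit_iff_isUnit_det A).1 hA),
      nonsing_inv_mul_cancel_left _ _ ((isUnit_iff_isUnit_det H).1 hH)]
  rw [← charpoly_map, hAσ, ← hH.unit_spec, charpoly_units_conj', ← transpose_nonsing_inv,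
    charpoly_transpose, charpoly_inv A hA, reverse_charpoly]

namespace Matrix

variable {R : Type*} [CommRing R] {n : ℕ}

def companion (p : R[X]) : Matrix (Fin n) (Fin n) R :=
  of fun i j => if (j : ℕ) + 1 = n then -p.coeff i else if (i : ℕ) = j + 1 then 1 else 0

theorem companion_map_submatrix_rev (σ : R →+* R) {p : R[X]} {c : R}
    (hσp : ∀ j ≤ n, σ (p.coeff j) = c * p.coeff (n - j)) :
    ((companion p).map σ).submatrix Fin.rev Fin.rev = (of fun i j : Fin n =>
      if (j : ℕ) = 0 then -(c * p.coeff (i + 1)) else if (i : ℕ) + 1 = j then 1 else 0) := by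
  ext i j
  have hi := i.isLt
  have hj := j.isLt
  simp only [companion, submatrix_apply, map_apply, of_apply, Fin.val_rev]
  by_cases hj0 : (j : ℕ) = 0
  · rw [if_pos (by omega), if_pos hj0, map_neg, hσp _ (by omega),
      show n - (n - (i + 1)) = i + 1 by omega]
  · rw [if_neg (by omega), if_neg hj0]
    by_cases hij : (i : ℕ) + 1 = j
    · rw [if_pos (by omega), if_pos hij, map_one]
    · rw [if_neg (by omega), if_neg hij, map_zero]

theorem companion_map_submatrix_rev_mul_companion (σ : R →+* R) {p : R[X]} {c : R}
    (hp : p.coeff n = 1) (hσp : ∀ j ≤ n, σ (p.coeff j) = c * p.coeff (n - j)) :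
    ((companion p).map σ).submatrix Fin.rev Fin.rev * companion (n := n) p = 1 := by
  have hc : c * p.coeff 0 = 1 := by simpa [hp] using (hσp n le_rfl).symm
  rw [companion_map_submatrix_rev σ hσp]
  ext i j
  rw [mul_apply]
  obtain _ | m := n
  · exact i.elim0
  rw [Fin.sum_univ_succ]
  simp only [companion, of_apply, Fin.val_zero, Fin.val_succ, if_true, add_left_inj,
    Nat.succ_ne_zero, if_false]
  have hi := i.isLt
  have hj := j.isLt
  by_cases hjm : (j : ℕ) = m
  · simp only [if_pos hjm]
    by_cases him : (i : ℕ) < m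
    · rw [Finset.sum_eq_single ⟨i, him⟩
        (fun x _ hx => by rw [if_neg (fun h => hx (Fin.ext h.symm)), zero_mul]) (by simp),
        one_apply_ne (Fin.ne_of_val_ne (by omega))]
      simp only [if_true, one_mul]
      linear_combination p.coeff (i + 1) * hc
    · rw [Finset.sum_eq_zero (fun x _ => by rw [if_neg (by omega), zero_mul]),
        Fin.ext (by omega : (i : ℕ) = j), one_apply_eq, hjm, hp]
      linear_combination hc
  · simp only [if_neg hjm, show ¬ (0 = (j : ℕ) + 1) by omega, if_false, mul_zero, zero_add]
    rw [Finset.sum_eq_single ⟨j, by omega⟩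
      (fun x _ hx => by rw [if_neg (fun h => hx (Fin.ext h)), mul_zero]) (by simp)]
    simp only [if_true, mul_one, one_apply, Fin.ext_iff]

theorem one_submatrix_rev_mul_submatrix_rev (M : Matrix (Fin n) (Fin n) R) :
    (1 : Matrix (Fin n) (Fin n) R).submatrix Fin.rev id * M.submatrix Fin.rev id = M :=
  (submatrix_id_mul_left 1 M Fin.rev Fin.revPerm).trans <| by
    rw [Fin.revPerm_symm]
    change (1 : Matrix (Fin n) (Fin n) R).submatrix Fin.revPerm Fin.revPerm * M = M
    rw [submatrix_one_equiv, Matrix.one_mul]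

theorem one_submatrix_rev_map_mul_self (σ : R →+* R) :
    ((1 : Matrix (Fin n) (Fin n) R).submatrix Fin.rev id).map σ *
      (1 : Matrix (Fin n) (Fin n) R).submatrix Fin.rev id = 1 := by
  rw [← submatrix_map, Matrix.map_one _ σ.map_zero σ.map_one,
    one_submatrix_rev_mul_submatrix_rev]

theorem companion_submatrix_rev_map_mul_self (σ : R →+* R) {p : R[X]} {c : R} (hp : p.Monic)
    (hdeg : p.natDegree = n) (hσp : p.map σ = C c * p.reverse) :
    ((companion (n := n) p).submatrix Fin.rev id).map σ *
      (companion p).submatrix Fin.rev id = 1 := by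
  subst hdeg
  rw [← submatrix_map]
  exact (submatrix_id_mul_left _ _ _ Fin.revPerm).trans
    (companion_map_submatrix_rev_mul_companion σ hp.coeff_natDegree
      fun j hj => apply_coeff_of_map_eq_C_mul_reverse σ hσp hj)

end Matrix

namespace Module.End

variable {K V : Type*} [Field K] [AddCommGroup V] [Module K V] [FiniteDimensional K V]

theorem exists_linearIndependent_pow_apply (f : Module.End K V) {d : ℕ}
    (hd : (minpoly K f).natDegree = d) :
    ∃ v : V, LinearIndependent K fun i : Fin d => (f ^ (i : ℕ)) v := by
  obtain ⟨x, hx⟩ := Module.exists_ker_toSpanSingleton_eq_annihilator K[X] (Module.AEval' f)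
  obtain ⟨v, rfl⟩ := (Module.AEval'.of f).surjective x
  -- `v` is killed only by multiples of `minpoly K f`, which has degree `d`.
  refine ⟨v, Fintype.linearIndependent_iff.2 fun c hc => ?_⟩
  set q : K[X] := ∑ i : Fin d, C (c i) * X ^ (i : ℕ)
  have hqv : q • Module.AEval'.of f v = 0 := by
    rw [← Module.AEval.of_aeval_smul]
    simp [q, Module.End.smul_def, LinearMap.sum_apply, ← smul_eq_C_mul, hc]
  have hq : q = 0 := by
    have hdvd : minpoly K f ∣ q := by
      rw [← Ideal.mem_span_singleton, span_minpoly_eq_annihilator, ← hx]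
      exact hqv
    exact eq_zero_of_dvd_of_degree_lt hdvd
      ((degree_sum_fin_lt c).trans_eq <| by
        rw [degree_eq_natDegree (minpoly.ne_zero (Algebra.IsIntegral.isIntegral f)), hd])
  intro i
  simpa [q, finsetSum_coeff, coeff_C_mul_X_pow, Fin.val_inj] using congr_arg (coeff · i) hq

theorem pow_finrank_eq_neg_sum (f : Module.End K V) :
    f ^ Module.finrank K V =
      -∑ i ∈ Finset.range (Module.finrank K V), f.charpoly.coeff i • f ^ i := by
  have h := f.aeval_self_charpoly
  rw [f.charpoly_monic.as_sum, f.charpoly_natDegree] at h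
  simp only [map_add, map_sum, ← smul_eq_C_mul, map_smul, aeval_X_pow] at h
  exact eq_neg_of_add_eq_zero_left h

theorem toMatrix_eq_companion (f : Module.End K V) {n : ℕ}
    (b : Module.Basis (Fin n) K V) (v : V) (hb : ∀ i, b i = (f ^ (i : ℕ)) v) :
    LinearMap.toMatrix b b f = companion f.charpoly := by
  have hCH := f.pow_finrank_eq_neg_sum
  rw [Module.finrank_eq_card_basis b, Fintype.card_fin] at hCH
  ext i j
  rw [LinearMap.toMatrix_apply, companion, of_apply, hb j, ← Module.End.mul_apply, ← pow_succ']
  split_ifs with hj hij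
  · simp only [hj, hCH, LinearMap.neg_apply, LinearMap.sum_apply, LinearMap.smul_apply,
      ← Fin.sum_univ_eq_sum_range (fun i => f.charpoly.coeff i • (f ^ i) v), ← hb, map_neg]
    rw [Finsupp.neg_apply, b.repr_sum_self (fun i : Fin n => f.charpoly.coeff i)]
  · rw [show (j : ℕ) + 1 = ((⟨j + 1, by omega⟩ : Fin n) : ℕ) from rfl, ← hb, b.repr_self,
      Finsupp.single_apply, if_pos (Fin.ext hij.symm)]
  · rw [show (j : ℕ) + 1 = ((⟨j + 1, by omega⟩ : Fin n) : ℕ) from rfl, ← hb, b.repr_self,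
      Finsupp.single_apply, if_neg (fun h => hij (by rw [← h]))]

end Module.End

theorem Matrix.exists_units_eq_mul_companion_mul_inv {K : Type*} [Field K] {n : ℕ}
    (A : Matrix (Fin n) (Fin n) K) (hA : A.charpoly = minpoly K A) :
    ∃ P : (Matrix (Fin n) (Fin n) K)ˣ,
      A = (P : Matrix (Fin n) (Fin n) K) * companion A.charpoly *
        (↑P⁻¹ : Matrix (Fin n) (Fin n) K) := by
  obtain ⟨v, hv⟩ := Module.End.exists_linearIndependent_pow_apply (toLin' A) (d := n) (by
    rw [minpoly_toLin', ← hA, charpoly_natDegree_eq_dim, Fintype.card_fin])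
  let b := basisOfLinearIndependentOfCardEqFinrank' _ hv (by simp)
  have hb : LinearMap.toMatrix b b (toLin' A) = companion A.charpoly := by
    rw [Module.End.toMatrix_eq_companion (toLin' A) b v (fun i => by simp [b]), charpoly_toLin']
  let e := Pi.basisFun K (Fin n)
  refine ⟨⟨e.toMatrix b, b.toMatrix e, e.toMatrix_mul_toMatrix_flip b,
    b.toMatrix_mul_toMatrix_flip e⟩, ?_⟩
  rw [Units.inv_mk, ← hb, basis_toMatrix_mul_linearMap_toMatrix_mul_basis_toMatrix,
    LinearMap.toMatrix_eq_toMatrix', LinearMap.toMatrix'_toLin']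

theorem stmt2_general {k L : Type*} [Field k] [Field L] [Algebra k L]
    (hquad : Module.finrank k L = 2)
    (σ : L ≃ₐ[k] L)
    {n : ℕ} (lam : Fin n → k) (hlam : ∀ i, lam i ≠ 0)
    (H : Matrix (Fin n) (Fin n) L)
    (hH : H = Matrix.diagonal fun i => algebraMap k L (lam i))
    (A : Matrix (Fin n) (Fin n) L) (hA_unit : IsUnit A)
    (hA_U : Aᵀ * H * A.map σ = H) (hA_det : A.det = 1)
    (hmin : A.charpoly = minpoly L A) :
    ∃ B₁ B₂ : Matrix (Fin n) (Fin n) L, IsUnit B₁ ∧ IsUnit B₂ ∧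
      A = B₁ * B₂ ∧ (B₁.map σ) * B₁ = 1 ∧ (B₂.map σ) * B₂ = 1 := by
  let τ : Matrix (Fin n) (Fin n) L →* Matrix (Fin n) (Fin n) L :=
    (RingHom.mapMatrix (σ : L →+* L)).toMonoidHom
  have hτ : Function.Involutive τ := fun M => by
    ext; simp [τ, σ.involutive_of_finrank_eq_two hquad _]
  have hHunit : IsUnit H := by
    rw [hH, isUnit_diagonal, Pi.isUnit_iff]
    exact fun i => (hlam i).isUnit.map (algebraMap k L)
  have hpoly := charpoly_map_of_transpose_mul_mul_map_eq (σ : L →+* L) hA_unit hHunit hA_U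
  rw [hA_det, Ring.inverse_one, map_one, mul_one, Fintype.card_fin,
    show (-1 : L[X]) ^ n = C ((-1) ^ n) by simp] at hpoly
  obtain ⟨P, hP⟩ := exists_units_eq_mul_companion_mul_inv A hmin
  obtain ⟨B₁, B₂, hB, h₁, h₂⟩ := exists_units_conj_mul_eq_mul hτ P
    (one_submatrix_rev_map_mul_self (σ : L →+* L))
    (companion_submatrix_rev_map_mul_self (σ : L →+* L) A.charpoly_monic (by simp) hpoly)
  rw [one_submatrix_rev_mul_submatrix_rev] at hB
  exact ⟨B₁, B₂, (isUnit_iff_isUnit_det _).2 (isUnit_det_of_left_inverse h₁),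
    (isUnit_iff_isUnit_det _).2 (isUnit_det_of_left_inverse h₂), hP.trans hB, h₁, h₂⟩

/-- If `A ∈ SU(H)` has characteristic polynomial equal to its minimal
polynomial, then there exist `B₁, B₂ ∈ GL(n,L)` with `A = B₁ B₂` and
`B̄₁ B₁ = I = B̄₂ B₂`. -/
theorem stmt2 {k L : Type*} [Field k] [Field L] [Algebra k L]
    (hchar : (2 : k) ≠ 0) (hquad : Module.finrank k L = 2)
    (σ : L ≃ₐ[k] L) (hσ : σ ≠ AlgEquiv.refl)
    {n : ℕ} (lam : Fin n → k) (hlam : ∀ i, lam i ≠ 0)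
    (H : Matrix (Fin n) (Fin n) L)
    (hH : H = Matrix.diagonal fun i => algebraMap k L (lam i))
    (A : Matrix (Fin n) (Fin n) L) (hA_unit : IsUnit A)
    (hA_U : Aᵀ * H * A.map σ = H) (hA_det : A.det = 1)
    (hmin : A.charpoly = minpoly L A) :
    ∃ B₁ B₂ : Matrix (Fin n) (Fin n) L, IsUnit B₁ ∧ IsUnit B₂ ∧
      A = B₁ * B₂ ∧ (B₁.map σ) * B₁ = 1 ∧ (B₂.map σ) * B₂ = 1 :=
  stmt2_general hquad σ lam hlam H hH A hA_unit hA_U hA_det hmin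
end

section
/- Let A ∈ SU(H) be such that its characteristic polynomial over L equals its minimal polynomial. Then Ā is conjugate to A^{-1} by an element of U(H) if and only if A = A_1 A_2 with A_1, A_2 ∈ U(H) satisfying Ā_1 A_1 = I = Ā_2 A_2. -/
/-!
If `X ∈ U(H)` conjugates `Ā` to `A⁻¹`, then `G = H X̄` satisfies `G A = Aᵀ G`. Since `A` has a
cyclic vector, every such `G` is symmetric (Taussky–Zassenhaus), and the symmetry of `H X̄`
together with `Xᵀ H X̄ = H` forces `X X̄ = 1`; then `A = (A X) X̄` is the required factorization.
Conversely `A₁` itself conjugates `Ā` to `A⁻¹`. That `σ` is an involution only uses that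
`L ≃ₐ[k] L` has at most `[L : k] = 2` elements.
-/

open Matrix Polynomial

namespace Matrix

theorem mul_aeval_eq_transpose_mul {R ι : Type*} [CommSemiring R] [Fintype ι] [DecidableEq ι]
    {A G : Matrix ι ι R} (hG : G * A = Aᵀ * G) (p : R[X]) :
    G * aeval A p = (aeval A p)ᵀ * G := by
  induction p using Polynomial.induction_on' with
  | add p q hp hq => rw [map_add, mul_add, hp, hq, transpose_add, add_mul]
  | monomial n a =>
    have hpow : G * A ^ n = (Aᵀ) ^ n * G := SemiconjBy.pow_right hG n
    rw [aeval_monomial, ← Algebra.smul_def]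
    simp [hpow, transpose_pow]

section Cyclic

variable {K ι : Type*} [Field K] [Fintype ι] [DecidableEq ι]

theorem exists_cyclic_vector_of_charpoly_eq_minpoly (A : Matrix ι ι K)
    (hA : A.charpoly = minpoly K A) :
    ∃ v₀ : ι → K, ∀ v, ∃ p : K[X], aeval A p *ᵥ v₀ = v := by
  obtain ⟨x, hx⟩ :=
    Module.exists_ker_toSpanSingleton_eq_annihilator K[X] (Module.AEval K (ι → K) A)
  set v₀ := (Module.AEval.of K (ι → K) A).symm x
  have hann : ∀ g : K[X], aeval A g *ᵥ v₀ = 0 → minpoly K A ∣ g := by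
    intro g hg
    have hgx : g ∈ Module.annihilator K[X] (Module.AEval K (ι → K) A) := by
      rw [← hx]
      exact (Module.AEval.of K (ι → K) A).symm.injective hg
    refine minpoly.dvd K A (Matrix.ext_iff_mulVec.mpr fun v => ?_)
    simpa using congrArg (Module.AEval.of K (ι → K) A).symm
      (Module.mem_annihilator.mp hgx (Module.AEval.of K (ι → K) A v))
  let ψ : degreeLT K (Fintype.card ι) →ₗ[K] ι → K := LinearMap.applyₗ v₀ ∘ₗ
    Matrix.toLin'.toLinearMap ∘ₗ (aeval A).toLinearMap ∘ₗ (degreeLT K _).subtype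
  have hinj : Function.Injective ψ := by
    refine (injective_iff_map_eq_zero ψ).mpr fun g hg => ?_
    refine Subtype.ext (eq_zero_of_dvd_of_degree_lt (hann g hg) ?_)
    rw [← hA, charpoly_degree_eq_dim]
    exact mem_degreeLT.mp g.2
  have := (degreeLTEquiv K (Fintype.card ι)).symm.finiteDimensional
  have hrank : Module.finrank K (degreeLT K (Fintype.card ι)) = Module.finrank K (ι → K) := by
    rw [(degreeLTEquiv K _).finrank_eq]
    simp
  refine ⟨v₀, fun v => ?_⟩
  obtain ⟨g, rfl⟩ := (LinearMap.injective_iff_surjective_of_finrank_eq_finrank hrank).mp hinj v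
  exact ⟨g, rfl⟩

theorem isSymm_of_mul_eq_transpose_mul {A G : Matrix ι ι K} (hA : A.charpoly = minpoly K A)
    (hG : G * A = Aᵀ * G) : G.IsSymm := by
  obtain ⟨v₀, hv₀⟩ := A.exists_cyclic_vector_of_charpoly_eq_minpoly hA
  have hsymm : ∀ u w, u ⬝ᵥ (G *ᵥ w) = w ⬝ᵥ (G *ᵥ u) := by
    intro u w
    obtain ⟨p, rfl⟩ := hv₀ u
    obtain ⟨q, rfl⟩ := hv₀ w
    have key : ∀ p q : K[X], (aeval A p *ᵥ v₀) ⬝ᵥ (G *ᵥ (aeval A q *ᵥ v₀))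
        = v₀ ⬝ᵥ ((G * aeval A (p * q)) *ᵥ v₀) := fun p q => by
      rw [map_mul, ← Matrix.mul_assoc, mul_aeval_eq_transpose_mul hG, Matrix.mul_assoc,
        ← mulVec_mulVec, ← mulVec_mulVec, dotProduct_mulVec v₀, vecMul_transpose]
    rw [key, key, mul_comm]
  ext i j
  simpa using hsymm (Pi.single j 1) (Pi.single i 1)

end Cyclic

section Unitary

variable {R ι F : Type*} [Fintype ι] [DecidableEq ι]

theorem conj_map_mul_eq_inv [CommRing R] [FunLike F R R] [RingHomClass F R R] {σ : F}
    {A₁ A₂ : Matrix ι ι R} (h₁ : A₁.map σ * A₁ = 1) (h₂ : A₂.map σ * A₂ = 1) :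
    A₁ * (A₁ * A₂).map σ * A₁⁻¹ = (A₁ * A₂)⁻¹ := by
  rw [Matrix.map_mul, mul_inv_rev, inv_eq_left_inv h₁, inv_eq_left_inv h₂,
    ← Matrix.mul_assoc, mul_eq_one_comm.mp h₁, Matrix.one_mul]

variable [Field R] [FunLike F R R] [RingHomClass F R R] {σ : F} {H A X : Matrix ι ι R}

theorem mul_map_eq_one_of_mul_mul_map_eq (hσ : Function.Involutive σ) (hHt : Hᵀ = H)
    (hHσ : H.map σ = H) (hH : IsUnit H) (hA : A.charpoly = minpoly R A)
    (hAU : Aᵀ * H * A.map σ = H) (hXU : Xᵀ * H * X.map σ = H)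
    (hconjσ : A.map σ * X.map σ * A = X.map σ) : X * X.map σ = 1 := by
  have hG : H * X.map σ * A = Aᵀ * (H * X.map σ) := by
    calc H * X.map σ * A = Aᵀ * H * A.map σ * X.map σ * A := by rw [hAU]
      _ = Aᵀ * (H * (A.map σ * X.map σ * A)) := by simp only [Matrix.mul_assoc]
      _ = Aᵀ * (H * X.map σ) := by rw [hconjσ]
  have hsymm : (X.map σ)ᵀ * H = H * X.map σ := by
    simpa [hHt] using (isSymm_of_mul_eq_transpose_mul hA hG).eq
  have hsymmσ : Xᵀ * H = H * X := by
    simpa [← transpose_map, hσ.comp_self, hHσ] using congrArg (·.map σ) hsymm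
  refine hH.mul_left_cancel ?_
  rw [← Matrix.mul_assoc, ← hsymmσ, hXU, Matrix.mul_one]

theorem exists_factorization_of_conj_map_eq_inv (hσ : Function.Involutive σ) (hHt : Hᵀ = H)
    (hHσ : H.map σ = H) (hH : IsUnit H) (hA : A.charpoly = minpoly R A) (hAu : IsUnit A)
    (hAU : Aᵀ * H * A.map σ = H) (hXu : IsUnit X) (hXU : Xᵀ * H * X.map σ = H)
    (hXA : X * A.map σ * X⁻¹ = A⁻¹) :
    ∃ A₁ A₂ : Matrix ι ι R, IsUnit A₁ ∧ A₁ᵀ * H * A₁.map σ = H ∧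
      IsUnit A₂ ∧ A₂ᵀ * H * A₂.map σ = H ∧
      A = A₁ * A₂ ∧ A₁.map σ * A₁ = 1 ∧ A₂.map σ * A₂ = 1 := by
  have hconj : A * X * A.map σ = X := by
    calc A * X * A.map σ = A * (X * A.map σ * X⁻¹ * X) := by
          rw [nonsing_inv_mul_cancel_right X _ ((isUnit_iff_isUnit_det X).mp hXu),
            Matrix.mul_assoc]
      _ = X := by
          rw [hXA, mul_nonsing_inv_cancel_left A X ((isUnit_iff_isUnit_det A).mp hAu)]
  have hconjσ : A.map σ * X.map σ * A = X.map σ := by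
    simpa [map_involutive hσ A] using congrArg (·.map σ) hconj
  have hXX := mul_map_eq_one_of_mul_mul_map_eq hσ hHt hHσ hH hA hAU hXU hconjσ
  have hXX' : X.map σ * X = 1 := mul_eq_one_comm.mp hXX
  refine ⟨A * X, X.map σ, hAu.mul hXu, ?_, ⟨⟨X.map σ, X, hXX', hXX⟩, rfl⟩, ?_, ?_, ?_, ?_⟩
  · calc (A * X)ᵀ * H * (A * X).map σ = Xᵀ * (Aᵀ * H * A.map σ) * X.map σ := by
          simp only [transpose_mul, Matrix.map_mul, Matrix.mul_assoc]
      _ = H := by rw [hAU, hXU]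
  · simpa [← transpose_map, hσ.comp_self, hHσ] using congrArg (·.map σ) hXU
  · rw [Matrix.mul_assoc, hXX, Matrix.mul_one]
  · rw [Matrix.map_mul, ← Matrix.mul_assoc, hconjσ, hXX']
  · rw [Matrix.map_map, hσ.comp_self, Matrix.map_id, hXX]

end Unitary

end Matrix

theorem stmt4_general {k L : Type*} [Field k] [Field L] [Algebra k L]
    (hquad : Module.finrank k L = 2)
    (σ : L ≃ₐ[k] L)
    {n : ℕ} (lam : Fin n → k) (hlam : ∀ i, lam i ≠ 0)
    (H : Matrix (Fin n) (Fin n) L)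
    (hH : H = Matrix.diagonal fun i => algebraMap k L (lam i))
    (A : Matrix (Fin n) (Fin n) L) (hA_unit : IsUnit A)
    (hA_U : Aᵀ * H * A.map σ = H)
    (hmin : A.charpoly = minpoly L A) :
    (∃ X : Matrix (Fin n) (Fin n) L, IsUnit X ∧ Xᵀ * H * X.map σ = H ∧
        X * A.map σ * X⁻¹ = A⁻¹) ↔
    (∃ A₁ A₂ : Matrix (Fin n) (Fin n) L,
        IsUnit A₁ ∧ A₁ᵀ * H * A₁.map σ = H ∧
        IsUnit A₂ ∧ A₂ᵀ * H * A₂.map σ = H ∧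
        A = A₁ * A₂ ∧ (A₁.map σ) * A₁ = 1 ∧ (A₂.map σ) * A₂ = 1) := by
  have hσ := σ.involutive_of_finrank_eq_two hquad
  have hHt : Hᵀ = H := by rw [hH, diagonal_transpose]
  have hHσ : H.map σ = H := by simp [hH, diagonal_map]
  have hHu : IsUnit H := by
    rw [hH, isUnit_diagonal, Pi.isUnit_iff]
    exact fun i => ((hlam i).isUnit).map (algebraMap k L)
  constructor
  · rintro ⟨X, hXu, hXU, hXA⟩
    exact exists_factorization_of_conj_map_eq_inv hσ hHt hHσ hHu hmin hA_unit hA_U hXu hXU hXA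
  · rintro ⟨A₁, A₂, hu₁, hU₁, -, -, rfl, h₁, h₂⟩
    exact ⟨A₁, hu₁, hU₁, conj_map_mul_eq_inv h₁ h₂⟩

/-- For `A ∈ SU(H)` with characteristic polynomial equal to its minimal
polynomial, `Ā` is conjugate to `A⁻¹` by an element of `U(H)` iff `A = A₁ A₂` with
`A₁, A₂ ∈ U(H)` satisfying `Ā₁ A₁ = I = Ā₂ A₂`. -/
theorem stmt4 {k L : Type*} [Field k] [Field L] [Algebra k L]
    (hchar : (2 : k) ≠ 0) (hquad : Module.finrank k L = 2)
    (σ : L ≃ₐ[k] L) (hσ : σ ≠ AlgEquiv.refl)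
    {n : ℕ} (lam : Fin n → k) (hlam : ∀ i, lam i ≠ 0)
    (H : Matrix (Fin n) (Fin n) L)
    (hH : H = Matrix.diagonal fun i => algebraMap k L (lam i))
    (A : Matrix (Fin n) (Fin n) L) (hA_unit : IsUnit A)
    (hA_U : Aᵀ * H * A.map σ = H) (hA_det : A.det = 1)
    (hmin : A.charpoly = minpoly L A) :
    (∃ X : Matrix (Fin n) (Fin n) L, IsUnit X ∧ Xᵀ * H * X.map σ = H ∧
        X * A.map σ * X⁻¹ = A⁻¹) ↔
    (∃ A₁ A₂ : Matrix (Fin n) (Fin n) L,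
        IsUnit A₁ ∧ A₁ᵀ * H * A₁.map σ = H ∧
        IsUnit A₂ ∧ A₂ᵀ * H * A₂.map σ = H ∧
        A = A₁ * A₂ ∧ (A₁.map σ) * A₁ = 1 ∧ (A₂.map σ) * A₂ = 1) :=
  stmt4_general hquad σ lam hlam H hH A hA_unit hA_U hmin
end

section
/- Let A ∈ SU(H) be such that its characteristic polynomial over L equals its minimal polynomial. Then Ā is conjugate to A^{-1} by an element of SU(H) if and only if A = A_1 A_2 with A_1, A_2 ∈ SU(H) satisfying Ā_1 A_1 = I = Ā_2 A_2. -/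
/-!
Put `R = H X⁻¹`. Unitarity of `A` together with `X Ā X⁻¹ = A⁻¹` gives `Aᵀ R = R A`.
As the characteristic and minimal polynomials of `A` agree, `A` has a cyclic vector `w`:
every vector is `p(A) w` for a polynomial `p`. Then
`(p(A) w) ⬝ R (q(A) w) = w ⬝ R p(A) q(A) w` is symmetric in `p, q`, so `R` is symmetric,
i.e. `Xᵀ H = H X`; with `Xᵀ H X̄ = H` this gives `X̄ X = 1`, and `A = X (X⁻¹ A)` is the required
factorisation. Conversely, if `Ā₁ A₁ = 1 = Ā₂ A₂` then `A₁` conjugates `Ā = A₁⁻¹ A₂⁻¹` to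
`A₂⁻¹ A₁⁻¹ = A⁻¹`.
-/

open Matrix Polynomial Module

theorem SemiconjBy.aeval {R A : Type*} [CommSemiring R] [Semiring A] [Algebra R A] {r a b : A}
    (h : SemiconjBy r a b) (p : R[X]) : SemiconjBy r (aeval a p) (aeval b p) := by
  induction p using Polynomial.induction_on with
  | C c =>
    rw [aeval_C, aeval_C]
    exact (Algebra.commutes c r).symm
  | add p q hp hq => simpa only [map_add] using hp.add_right hq
  | monomial k c hk =>
    simpa only [map_mul, map_pow, aeval_X, pow_succ, ← mul_assoc] using hk.mul_right h

theorem Module.End.exists_surjective_aeval_apply {K V : Type*} [Field K] [AddCommGroup V]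
    [Module K V] [FiniteDimensional K V] (φ : Module.End K V)
    (hφ : (minpoly K φ).natDegree = finrank K V) :
    ∃ w : V, ∀ v : V, ∃ p : K[X], aeval φ p w = v := by
  obtain ⟨x, hx⟩ := exists_ker_toSpanSingleton_eq_annihilator K[X] (AEval' φ)
  obtain ⟨w, rfl⟩ := (AEval'.of φ).surjective x
  rw [← span_minpoly_eq_annihilator] at hx
  have hdvd : ∀ p : K[X], aeval φ p w = 0 → minpoly K φ ∣ p := fun p hp => by
    rw [← Ideal.mem_span_singleton, ← hx, LinearMap.mem_ker, LinearMap.toSpanSingleton_apply,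
      ← AEval.of_aeval_smul]
    simp [hp]
  let Ψ : K[X]_(finrank K V) →ₗ[K] V :=
    LinearMap.applyₗ w ∘ₗ (aeval φ).toLinearMap ∘ₗ (K[X]_(finrank K V)).subtype
  have hΨ : Function.Injective Ψ := by
    rw [← LinearMap.ker_eq_bot, Submodule.eq_bot_iff]
    rintro ⟨p, hp⟩ hΨp
    rw [Submodule.mk_eq_zero]
    by_contra hp0
    have := natDegree_le_of_dvd (hdvd p hΨp) hp0
    have := (natDegree_lt_iff_degree_lt hp0).mpr (mem_degreeLT.mp hp)
    omega
  refine ⟨w, fun v => ?_⟩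
  obtain ⟨⟨p, -⟩, rfl⟩ := (LinearMap.injective_iff_surjective_of_finrank_eq_finrank
    (by simp [(degreeLTEquiv K _).finrank_eq])).mp hΨ v
  exact ⟨p, rfl⟩

namespace Matrix

section Cyclic

variable {n : Type*} [Fintype n] [DecidableEq n]

theorem transpose_aeval {R : Type*} [CommSemiring R] (A : Matrix n n R) (p : R[X]) :
    (aeval A p)ᵀ = aeval Aᵀ p := by
  apply MulOpposite.op_injective
  rw [← aeval_op_apply]
  exact (aeval_algHom_apply (transposeAlgEquiv n R R) A p).symm

variable {K : Type*} [Field K]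

theorem exists_surjective_aeval_mulVec {A : Matrix n n K} (hA : A.charpoly = minpoly K A) :
    ∃ w : n → K, ∀ v : n → K, ∃ p : K[X], aeval A p *ᵥ w = v := by
  obtain ⟨w, hw⟩ := Module.End.exists_surjective_aeval_apply (toLin' A) (by
    rw [minpoly_toLin', ← hA, charpoly_natDegree_eq_dim, Module.finrank_fintype_fun_eq_card])
  refine ⟨w, fun v => ?_⟩
  obtain ⟨p, rfl⟩ := hw v
  refine ⟨p, ?_⟩
  rw [← toLin'_apply]
  exact (LinearMap.congr_fun (aeval_algHom_apply toLinAlgEquiv' A p) w).symm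

theorem isSymm_of_transpose_mul_eq_mul {A R : Matrix n n K} (hA : A.charpoly = minpoly K A)
    (hR : Aᵀ * R = R * A) : R.IsSymm := by
  obtain ⟨w, hw⟩ := exists_surjective_aeval_mulVec hA
  have hform : ∀ p q : K[X], (aeval A p *ᵥ w) ⬝ᵥ R *ᵥ (aeval A q *ᵥ w) =
      w ⬝ᵥ R *ᵥ (aeval A (p * q) *ᵥ w) := fun p q => by
    have hRp : aeval Aᵀ p * R = R * aeval A p := (SemiconjBy.aeval hR.symm p).eq.symm
    rw [dotProduct_comm, ← dotProduct_transpose_mulVec, mulVec_mulVec, mulVec_mulVec,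
      transpose_aeval, hRp, map_mul, mul_assoc, mulVec_mulVec]
  have hsymm : ∀ u v : n → K, u ⬝ᵥ R *ᵥ v = v ⬝ᵥ R *ᵥ u := fun u v => by
    obtain ⟨p, rfl⟩ := hw u
    obtain ⟨q, rfl⟩ := hw v
    rw [hform, hform, mul_comm]
  ext i j
  simpa using hsymm (Pi.single j 1) (Pi.single i 1)

end Cyclic

section Unitary

variable {n L : Type*} [Fintype n] [CommRing L]

def IsUnitaryWrt (σ : L → L) (H X : Matrix n n L) : Prop :=
  Xᵀ * H * X.map σ = H

variable {F : Type*} [FunLike F L L] [RingHomClass F L L] {σ : F}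

theorem IsUnitaryWrt.mul {H X Y : Matrix n n L} (hX : IsUnitaryWrt σ H X)
    (hY : IsUnitaryWrt σ H Y) : IsUnitaryWrt σ H (X * Y) := by
  rw [IsUnitaryWrt, transpose_mul, Matrix.map_mul]
  calc Yᵀ * Xᵀ * H * (X.map σ * Y.map σ) = Yᵀ * (Xᵀ * H * X.map σ) * Y.map σ := by
        simp only [mul_assoc]
    _ = H := by rw [hX, hY]

variable [DecidableEq n]

theorem map_nonsing_inv {X : Matrix n n L} (hX : IsUnit X.det) : X⁻¹.map σ = (X.map σ)⁻¹ := by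
  refine (inv_eq_left_inv ?_).symm
  rw [← Matrix.map_mul, nonsing_inv_mul X hX, Matrix.map_one σ (map_zero σ) (map_one σ)]

theorem IsUnitaryWrt.nonsing_inv {H X : Matrix n n L} (hX : IsUnitaryWrt σ H X)
    (hXdet : IsUnit X.det) : IsUnitaryWrt σ H X⁻¹ := by
  have h₁ : X⁻¹ᵀ * Xᵀ = 1 := by rw [← transpose_mul, mul_nonsing_inv X hXdet, transpose_one]
  have h₂ : X.map σ * X⁻¹.map σ = 1 := by
    rw [← Matrix.map_mul, mul_nonsing_inv X hXdet, Matrix.map_one σ (map_zero σ) (map_one σ)]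
  calc X⁻¹ᵀ * H * X⁻¹.map σ = X⁻¹ᵀ * (Xᵀ * H * X.map σ) * X⁻¹.map σ := by rw [hX]
    _ = X⁻¹ᵀ * Xᵀ * H * (X.map σ * X⁻¹.map σ) := by simp only [mul_assoc]
    _ = H := by rw [h₁, h₂, one_mul, mul_one]

theorem conj_map_eq_nonsing_inv_of_map_mul_self_eq_one {A₁ A₂ : Matrix n n L}
    (h₁ : A₁.map σ * A₁ = 1) (h₂ : A₂.map σ * A₂ = 1) :
    A₁ * (A₁ * A₂).map σ * A₁⁻¹ = (A₁ * A₂)⁻¹ := by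
  rw [Matrix.map_mul, ← inv_eq_left_inv h₁, ← inv_eq_left_inv h₂, mul_inv_rev, ← mul_assoc,
    mul_nonsing_inv A₁ (isUnit_det_of_left_inverse h₁), one_mul]

end Unitary

variable {n K : Type*} [Fintype n] [DecidableEq n] [Field K] {σ : K → K}

theorem IsUnitaryWrt.map_mul_self_eq_one_of_conj_map_eq_inv {H A X : Matrix n n K}
    (hH : H.IsSymm) (hHdet : IsUnit H.det) (hA : A.charpoly = minpoly K A)
    (hAdet : IsUnit A.det) (hAU : IsUnitaryWrt σ H A) (hXU : IsUnitaryWrt σ H X)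
    (hXdet : IsUnit X.det) (hconj : X * A.map σ * X⁻¹ = A⁻¹) : X.map σ * X = 1 := by
  have hAbar : A.map σ = X⁻¹ * A⁻¹ * X := by
    rw [← hconj]
    simp only [mul_assoc, nonsing_inv_mul X hXdet, mul_one, nonsing_inv_mul_cancel_left _ _ hXdet]
  have hR : Aᵀ * (H * X⁻¹) = H * X⁻¹ * A :=
    calc Aᵀ * (H * X⁻¹) = Aᵀ * H * (X⁻¹ * A⁻¹ * X) * X⁻¹ * A := by
          simp only [mul_assoc, mul_nonsing_inv_cancel_left _ _ hXdet, nonsing_inv_mul A hAdet,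
            mul_one]
      _ = H * X⁻¹ * A := by rw [← hAbar, hAU]
  have hsymm : X⁻¹ᵀ * H = H * X⁻¹ := by
    simpa only [IsSymm, transpose_mul, hH.eq] using isSymm_of_transpose_mul_eq_mul hA hR
  have hHX : Xᵀ * H = H * X :=
    calc Xᵀ * H = Xᵀ * (H * X⁻¹) * X := by
          rw [mul_assoc, mul_assoc, nonsing_inv_mul X hXdet, mul_one]
      _ = Xᵀ * (X⁻¹ᵀ * H) * X := by rw [hsymm]
      _ = H * X := by
        rw [← mul_assoc, ← transpose_mul, nonsing_inv_mul X hXdet, transpose_one, one_mul]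
  have hHXX : H * (X * X.map σ) = H * 1 := by rw [← mul_assoc, ← hHX, hXU, mul_one]
  exact mul_eq_one_comm.mp (((isUnit_iff_isUnit_det H).mpr hHdet).mul_left_cancel hHXX)

end Matrix

theorem stmt5_general {k L : Type*} [Field k] [Field L] [Algebra k L]
    (σ : L ≃ₐ[k] L)
    {n : ℕ} (lam : Fin n → k) (hlam : ∀ i, lam i ≠ 0)
    (H : Matrix (Fin n) (Fin n) L)
    (hH : H = Matrix.diagonal fun i => algebraMap k L (lam i))
    (A : Matrix (Fin n) (Fin n) L) (hA_unit : IsUnit A)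
    (hA_U : Aᵀ * H * A.map σ = H) (hA_det : A.det = 1)
    (hmin : A.charpoly = minpoly L A) :
    (∃ X : Matrix (Fin n) (Fin n) L, IsUnit X ∧ Xᵀ * H * X.map σ = H ∧ X.det = 1 ∧
        X * A.map σ * X⁻¹ = A⁻¹) ↔
    (∃ A₁ A₂ : Matrix (Fin n) (Fin n) L,
        IsUnit A₁ ∧ A₁ᵀ * H * A₁.map σ = H ∧ A₁.det = 1 ∧
        IsUnit A₂ ∧ A₂ᵀ * H * A₂.map σ = H ∧ A₂.det = 1 ∧
        A = A₁ * A₂ ∧ (A₁.map σ) * A₁ = 1 ∧ (A₂.map σ) * A₂ = 1) := by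
  have hH_symm : H.IsSymm := hH ▸ isSymm_diagonal _
  have hH_det : IsUnit H.det := by
    rw [hH, det_diagonal]
    exact isUnit_iff_ne_zero.mpr (Finset.prod_ne_zero_iff.mpr fun i _ => by simpa using hlam i)
  have hA_unit_det : IsUnit A.det := (isUnit_iff_isUnit_det A).mp hA_unit
  constructor
  · rintro ⟨X, hX_unit, hX_U, hX_det, hconj⟩
    have hX_unit_det : IsUnit X.det := (isUnit_iff_isUnit_det X).mp hX_unit
    have hXX : X.map σ * X = 1 := IsUnitaryWrt.map_mul_self_eq_one_of_conj_map_eq_inv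
      hH_symm hH_det hmin hA_unit_det hA_U hX_U hX_unit_det hconj
    refine ⟨X, X⁻¹ * A, hX_unit, hX_U, hX_det, (isUnit_nonsing_inv_iff.mpr hX_unit).mul hA_unit,
      (IsUnitaryWrt.nonsing_inv hX_U hX_unit_det).mul hA_U, by simp [hX_det, hA_det],
      (mul_nonsing_inv_cancel_left _ _ hX_unit_det).symm, hXX, ?_⟩
    rw [Matrix.map_mul, map_nonsing_inv hX_unit_det, inv_eq_right_inv hXX, ← mul_assoc, hconj,
      nonsing_inv_mul A hA_unit_det]
  · rintro ⟨A₁, A₂, hA₁_unit, hA₁_U, hA₁_det, -, -, -, rfl, hA₁, hA₂⟩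
    exact ⟨A₁, hA₁_unit, hA₁_U, hA₁_det, conj_map_eq_nonsing_inv_of_map_mul_self_eq_one hA₁ hA₂⟩

/-- For `A ∈ SU(H)` with characteristic polynomial equal to its minimal
polynomial, `Ā` is conjugate to `A⁻¹` by an element of `SU(H)` iff `A = A₁ A₂` with
`A₁, A₂ ∈ SU(H)` satisfying `Ā₁ A₁ = I = Ā₂ A₂`. -/
theorem stmt5 {k L : Type*} [Field k] [Field L] [Algebra k L]
    (hchar : (2 : k) ≠ 0) (hquad : Module.finrank k L = 2)
    (σ : L ≃ₐ[k] L) (hσ : σ ≠ AlgEquiv.refl)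
    {n : ℕ} (lam : Fin n → k) (hlam : ∀ i, lam i ≠ 0)
    (H : Matrix (Fin n) (Fin n) L)
    (hH : H = Matrix.diagonal fun i => algebraMap k L (lam i))
    (A : Matrix (Fin n) (Fin n) L) (hA_unit : IsUnit A)
    (hA_U : Aᵀ * H * A.map σ = H) (hA_det : A.det = 1)
    (hmin : A.charpoly = minpoly L A) :
    (∃ X : Matrix (Fin n) (Fin n) L, IsUnit X ∧ Xᵀ * H * X.map σ = H ∧ X.det = 1 ∧
        X * A.map σ * X⁻¹ = A⁻¹) ↔
    (∃ A₁ A₂ : Matrix (Fin n) (Fin n) L,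
        IsUnit A₁ ∧ A₁ᵀ * H * A₁.map σ = H ∧ A₁.det = 1 ∧
        IsUnit A₂ ∧ A₂ᵀ * H * A₂.map σ = H ∧ A₂.det = 1 ∧
        A = A₁ * A₂ ∧ (A₁.map σ) * A₁ = 1 ∧ (A₂.map σ) * A₂ = 1) :=
  stmt5_general σ lam hlam H hH A hA_unit hA_U hA_det hmin
end

section
/- Let A ∈ SL(n,k) have irreducible characteristic polynomial χ_A over k, and let E = k[X]/(χ_A), a field extension of k of degree n. Then A is conjugate to its transpose ᵗA by an element of SL(n,k) if and only if for every T ∈ GL(n,k) with T A T^{-1} = ᵗA, det(T) lies in N_{E/k}(E^×). -/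
/-!
Since `χ_A` is irreducible, `x ↦ A` extends to an embedding `φ : E →ₐ[k] M_n(k)`, and for any
`v ≠ 0` the map `y ↦ φ y v` is an isomorphism `E ≃ kⁿ` carrying multiplication by `y` to `φ y`.
Hence the centralizer of `A` is `φ E` and `det (φ y) = N_{E/k} y`. As `ᵗA` has the same
characteristic polynomial, comparing the two isomorphisms for `A` and `ᵗA` gives some
`T₀ ∈ GL(n,k)` with `T₀ A T₀⁻¹ = ᵗA`, and the matrices conjugating `A` to `ᵗA` are exactly the
`T₀ φ y` with `y ∈ E^×`. Their determinants form the coset `det T₀ · N(E^×)`, which contains `1`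
iff `det T₀` is a norm.
-/

open Matrix Polynomial Module

section
variable {R ι α : Type*} [CommRing R] [Fintype ι] [DecidableEq ι]

theorem Matrix.ext_of_mulVec_surjective {f : α → ι → R} (hf : Function.Surjective f)
    {M N : Matrix ι ι R} (h : ∀ a, M *ᵥ f a = N *ᵥ f a) : M = N :=
  Matrix.toLin'.injective <| LinearMap.ext fun w => by
    obtain ⟨a, rfl⟩ := hf w
    exact h a

theorem Matrix.conj_eq_iff_mul_eq_mul {T M N : Matrix ι ι R} (hT : IsUnit T) :
    T * M * T⁻¹ = N ↔ T * M = N * T := by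
  let := hT.invertible
  exact mul_inv_eq_iff_eq_mul_of_invertible T _ _

theorem Matrix.commute_inv_mul_of_mul_eq_mul {C T M N : Matrix ι ι R} (hC : IsUnit C)
    (hCM : C * M = N * C) (hTM : T * M = N * T) : Commute (C⁻¹ * T) M := by
  let := hC.invertible
  have hCN : C⁻¹ * N = M * C⁻¹ := by
    rw [inv_mul_eq_iff_eq_mul_of_invertible, ← mul_assoc, hCM, mul_inv_cancel_right_of_invertible]
  calc C⁻¹ * T * M = C⁻¹ * N * T := by rw [mul_assoc, hTM, mul_assoc]
    _ = M * (C⁻¹ * T) := by rw [hCN, mul_assoc]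

end

section
variable {R S ι : Type*} [CommRing R] [CommRing S] [Algebra R S] [Fintype ι] [DecidableEq ι]
  {φ : S → Matrix ι ι R} {Θ : S ≃ₗ[R] (ι → R)}

theorem det_eq_norm_of_map_mul (hΘ : ∀ y z, Θ (y * z) = φ y *ᵥ Θ z) (y : S) :
    (φ y).det = Algebra.norm R y := by
  have hconj : Matrix.toLin' (φ y) =
      Θ.toLinearMap ∘ₗ Algebra.lmul R S y ∘ₗ Θ.symm.toLinearMap := by
    refine LinearMap.ext fun w => ?_
    obtain ⟨z, rfl⟩ := Θ.surjective w
    simp [hΘ]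
  rw [← LinearMap.det_toLin', hconj, LinearMap.det_conj, Algebra.norm_apply]

theorem exists_eq_of_forall_commute (hΘ : ∀ y z, Θ (y * z) = φ y *ᵥ Θ z)
    {M : Matrix ι ι R} (hM : ∀ z, Commute M (φ z)) : ∃ y, M = φ y := by
  set y := Θ.symm (M *ᵥ Θ 1)
  refine ⟨y, Matrix.ext_of_mulVec_surjective Θ.surjective fun z => ?_⟩
  calc M *ᵥ Θ z = M *ᵥ (φ z *ᵥ Θ 1) := by rw [← hΘ, mul_one]
    _ = φ z *ᵥ Θ y := by
      rw [mulVec_mulVec, (hM z).eq, ← mulVec_mulVec, LinearEquiv.apply_symm_apply]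
    _ = φ y *ᵥ Θ z := by rw [← hΘ, mul_comm, hΘ]

theorem exists_isUnit_mul_eq_mul {φ' : S → Matrix ι ι R} {Θ' : S ≃ₗ[R] (ι → R)}
    (hΘ : ∀ y z, Θ (y * z) = φ y *ᵥ Θ z) (hΘ' : ∀ y z, Θ' (y * z) = φ' y *ᵥ Θ' z) :
    ∃ T : Matrix ι ι R, IsUnit T ∧ ∀ y, T * φ y = φ' y * T := by
  set T := LinearMap.toMatrix' (Θ.symm ≪≫ₗ Θ').toLinearMap
  have hT : ∀ z, T *ᵥ Θ z = Θ' z := fun z => by simp [T]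
  refine ⟨T, ?_, fun y => Matrix.ext_of_mulVec_surjective Θ.surjective fun z => ?_⟩
  · rw [isUnit_iff_isUnit_det, LinearMap.det_toMatrix']
    exact LinearEquiv.isUnit_det' _
  · rw [← mulVec_mulVec, ← mulVec_mulVec, ← hΘ, hT, hT, hΘ']

end

theorem AlgHom.commute_apply_of_adjoin_eq_top {R S A : Type*} [CommRing R] [Ring S]
    [Algebra R S] [Ring A] [Algebra R A] (φ : S →ₐ[R] A) {x : S}
    (hx : Algebra.adjoin R {x} = ⊤) {M : A} (hM : Commute M (φ x)) (z : S) :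
    Commute M (φ z) := by
  have hz : φ z ∈ (Algebra.adjoin R {x}).map φ :=
    Subalgebra.mem_map.mpr ⟨z, hx ▸ trivial, rfl⟩
  rw [AlgHom.map_adjoin, Set.image_singleton] at hz
  exact Algebra.commute_of_mem_adjoin_singleton_of_commute hz hM

theorem exists_algHom_apply_eq_of_adjoin_eq_top {K S A : Type*} [Field K] [CommRing S]
    [Algebra K S] [Ring A] [Algebra K A] {x : S} (hx : IsIntegral K x)
    (htop : Algebra.adjoin K {x} = ⊤) {a : A} (ha : aeval a (minpoly K x) = 0) :
    ∃ φ : S →ₐ[K] A, φ x = a :=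
  ⟨(PowerBasis.ofAdjoinEqTop hx htop).lift a ha, PowerBasis.lift_gen _ a ha⟩

theorem Algebra.adjoin_eq_top_of_finrank_eq {K L : Type*} [Field K] [Field L] [Algebra K L]
    [FiniteDimensional K L] {x : L} (hx : IsIntegral K x)
    (h : finrank K L = (minpoly K x).natDegree) : Algebra.adjoin K {x} = ⊤ := by
  refine Algebra.toSubmodule_eq_top.mp (Submodule.eq_top_of_finrank_eq ?_)
  rw [Subalgebra.finrank_toSubmodule, (Algebra.adjoin.powerBasis hx).finrank, h]
  rfl

section
variable {k E ι : Type*} [Field k] [Field E] [Algebra k E] [Fintype ι] [DecidableEq ι]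

theorem AlgHom.exists_linearEquiv_map_mul [FiniteDimensional k E]
    (hdim : finrank k E = Fintype.card ι) (φ : E →ₐ[k] Matrix ι ι k) :
    ∃ Θ : E ≃ₗ[k] (ι → k), ∀ y z, Θ (y * z) = φ y *ᵥ Θ z := by
  have : Nonempty ι := Fintype.card_pos_iff.mp (hdim ▸ finrank_pos)
  obtain ⟨v, hv⟩ := exists_ne (0 : ι → k)
  let θ : E →ₗ[k] (ι → k) :=
    LinearMap.applyₗ v ∘ₗ Matrix.toLin'.toLinearMap ∘ₗ φ.toLinearMap
  have hθ : ∀ y, θ y = φ y *ᵥ v := fun y => rfl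
  have hinj : Function.Injective θ := by
    refine (injective_iff_map_eq_zero θ).mpr fun y hy => by_contra fun hy0 => hv ?_
    calc v = φ (y⁻¹ * y) *ᵥ v := by rw [inv_mul_cancel₀ hy0, map_one, one_mulVec]
      _ = 0 := by rw [map_mul, ← mulVec_mulVec, ← hθ, hy, mulVec_zero]
  have hrank : finrank k E = finrank k (ι → k) := by rw [hdim, finrank_fintype_fun_eq_card]
  refine ⟨LinearMap.linearEquivOfInjective θ hinj hrank, fun y z => ?_⟩
  simp [hθ, mulVec_mulVec]

theorem AlgHom.commute_iff_exists_eq {φ : E →ₐ[k] Matrix ι ι k} {Θ : E ≃ₗ[k] (ι → k)}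
    (hΘ : ∀ y z, Θ (y * z) = φ y *ᵥ Θ z) {x : E} (hx : Algebra.adjoin k {x} = ⊤)
    (M : Matrix ι ι k) : Commute M (φ x) ↔ ∃ y, M = φ y := by
  refine ⟨fun hM => exists_eq_of_forall_commute hΘ (φ.commute_apply_of_adjoin_eq_top hx hM), ?_⟩
  rintro ⟨y, rfl⟩
  exact (Commute.all y x).map φ

theorem exists_det_eq_one_conj_iff [FiniteDimensional k E] {A B T₀ : Matrix ι ι k}
    {φ : E → Matrix ι ι k} (hcent : ∀ M, Commute M A ↔ ∃ y, M = φ y)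
    (hdet : ∀ y, (φ y).det = Algebra.norm k y) (hT₀ : IsUnit T₀) (hT₀A : T₀ * A = B * T₀) :
    (∃ C : Matrix ι ι k, C.det = 1 ∧ C * A * C⁻¹ = B) ↔
      ∀ T : Matrix ι ι k, IsUnit T → T * A * T⁻¹ = B →
        ∃ y : E, y ≠ 0 ∧ Algebra.norm k y = T.det := by
  constructor
  · rintro ⟨C, hCdet, hC⟩ T hT hTA
    have hCu : IsUnit C := (isUnit_iff_isUnit_det C).mpr (hCdet ▸ isUnit_one)
    obtain ⟨y, hy⟩ := (hcent _).mp <| commute_inv_mul_of_mul_eq_mul hCu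
      ((conj_eq_iff_mul_eq_mul hCu).mp hC) ((conj_eq_iff_mul_eq_mul hT).mp hTA)
    have hdetT : T.det = Algebra.norm k y := by
      rw [← hdet, ← hy, det_mul, det_nonsing_inv, hCdet, Ring.inverse_one, one_mul]
    refine ⟨y, (Algebra.norm_ne_zero_iff (R := k)).mp ?_, hdetT.symm⟩
    exact hdetT ▸ ((isUnit_iff_isUnit_det T).mp hT).ne_zero
  · intro h
    obtain ⟨y, hy0, hy⟩ := h T₀ hT₀ ((conj_eq_iff_mul_eq_mul hT₀).mpr hT₀A)
    have hCdet : (T₀ * φ y⁻¹).det = 1 := by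
      rw [det_mul, hdet, ← hy, ← map_mul, mul_inv_cancel₀ hy0, map_one]
    have hCu : IsUnit (T₀ * φ y⁻¹) := (isUnit_iff_isUnit_det _).mpr (hCdet ▸ isUnit_one)
    refine ⟨T₀ * φ y⁻¹, hCdet, (conj_eq_iff_mul_eq_mul hCu).mpr ?_⟩
    rw [mul_assoc, ((hcent _).mpr ⟨_, rfl⟩).eq, ← mul_assoc, hT₀A, mul_assoc]

end

theorem stmt10_general {k : Type*} [Field k] {n : ℕ}
    (A : Matrix (Fin n) (Fin n) k)
    (hirr : Irreducible A.charpoly)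
    (E : Type*) [Field E] [Algebra k E]
    (x : E) (hx : Polynomial.aeval x A.charpoly = 0)
    (hdim : Module.finrank k E = n) :
    (∃ C : Matrix (Fin n) (Fin n) k, C.det = 1 ∧ C * A * C⁻¹ = Aᵀ) ↔
    (∀ T : Matrix (Fin n) (Fin n) k, IsUnit T → T * A * T⁻¹ = Aᵀ →
      ∃ y : E, y ≠ 0 ∧ Algebra.norm k y = T.det) := by
  classical
  have hχ : minpoly k x = A.charpoly :=
    (minpoly.eq_of_irreducible_of_monic hirr hx A.charpoly_monic).symm
  have hxint : IsIntegral k x := ⟨_, A.charpoly_monic, hx⟩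
  have hdeg : (minpoly k x).natDegree = Fintype.card (Fin n) := by
    rw [hχ, charpoly_natDegree_eq_dim]
  have hdim' : finrank k E = Fintype.card (Fin n) := hdim.trans (Fintype.card_fin n).symm
  have : FiniteDimensional k E :=
    Module.finite_of_finrank_pos (hdim' ▸ hdeg ▸ minpoly.natDegree_pos hxint)
  have htop := Algebra.adjoin_eq_top_of_finrank_eq hxint (hdim'.trans hdeg.symm)
  obtain ⟨φ, hφ⟩ := exists_algHom_apply_eq_of_adjoin_eq_top hxint htop
    (a := A) (by rw [hχ, aeval_self_charpoly])
  obtain ⟨ψ, hψ⟩ := exists_algHom_apply_eq_of_adjoin_eq_top hxint htop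
    (a := Aᵀ) (by rw [hχ, ← charpoly_transpose, aeval_self_charpoly])
  obtain ⟨Θ, hΘ⟩ := φ.exists_linearEquiv_map_mul hdim'
  obtain ⟨Ψ, hΨ⟩ := ψ.exists_linearEquiv_map_mul hdim'
  obtain ⟨T₀, hT₀, hT₀φ⟩ := exists_isUnit_mul_eq_mul hΘ hΨ
  refine exists_det_eq_one_conj_iff (fun M => hφ ▸ φ.commute_iff_exists_eq hΘ htop M)
    (det_eq_norm_of_map_mul hΘ) hT₀ ?_
  simpa [hφ, hψ] using hT₀φ x

/-- Let `A ∈ SL(n,k)` have irreducible characteristic polynomial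
`χ_A`, and let `E = k[X]/(χ_A)` (realized as a field extension of `k` of degree `n`
with a root `x` of `χ_A`). Then `A` is conjugate to `ᵗA` by an element of `SL(n,k)`
iff for every `T ∈ GL(n,k)` with `T A T⁻¹ = ᵗA`, `det(T)` is a norm from `E`. -/
theorem stmt10 {k : Type*} [Field k] {n : ℕ}
    (A : Matrix (Fin n) (Fin n) k) (hA_det : A.det = 1)
    (hirr : Irreducible A.charpoly)
    (E : Type*) [Field E] [Algebra k E]
    (x : E) (hx : Polynomial.aeval x A.charpoly = 0)
    (hdim : Module.finrank k E = n) :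
    (∃ C : Matrix (Fin n) (Fin n) k, C.det = 1 ∧ C * A * C⁻¹ = Aᵀ) ↔
    (∀ T : Matrix (Fin n) (Fin n) k, IsUnit T → T * A * T⁻¹ = Aᵀ →
      ∃ y : E, y ≠ 0 ∧ Algebra.norm k y = T.det) :=
  stmt10_general A hirr E x hx hdim
end

section
/- Let A ∈ SL(3,k) have irreducible characteristic polynomial χ_A over k, and let E = k[X]/(χ_A), a cubic field extension of k. If every element of k^× is a norm from E, i.e., k^× = N_{E/k}(E^×), then A is conjugate to its transpose ᵗA by an element of SL(3,k). -/
/-!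
A `k`-algebra map `φ : E →ₐ[k] Matrix ι ι k` with `[E : k] = |ι|` makes `k^ι` a
one-dimensional `E`-vector space, so for any `v ≠ 0` the orbit map `z ↦ φ z *ᵥ v` is a
`k`-linear isomorphism `E ≃ k^ι` turning `φ y` into multiplication by `y`; in particular
`det (φ y) = N_{E/k} y`. Hence any two such maps `φ, ψ` are intertwined by an invertible `C`,
and then also by `ψ y * C`, whose determinant `N(y) det C` becomes `1` for a suitable `y` when
every unit of `k` is a norm. Since `E = k[x]` with `minpoly k x = χ_A = χ_{ᵗA}`, we apply this
to `x ↦ A` and `x ↦ ᵗA`.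
-/

open Matrix Polynomial

theorem Algebra.adjoin_singleton_eq_top_of_natDegree_minpoly_eq_finrank {k E : Type*} [Field k]
    [CommRing E] [Algebra k E] [FiniteDimensional k E] {x : E} (hx : IsIntegral k x)
    (h : (minpoly k x).natDegree = Module.finrank k E) : Algebra.adjoin k {x} = ⊤ := by
  refine Subalgebra.eq_of_le_of_finrank_eq le_top ?_
  rw [(Algebra.adjoin.powerBasis hx).finrank, Algebra.adjoin.powerBasis_dim, h,
    Subalgebra.topEquiv.toLinearEquiv.finrank_eq]

theorem nonempty_of_finrank_eq_card {k E ι : Type*} [Field k] [Ring E] [Nontrivial E]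
    [Algebra k E] [FiniteDimensional k E] [Fintype ι]
    (hdim : Module.finrank k E = Fintype.card ι) : Nonempty ι :=
  Fintype.card_pos_iff.mp (hdim ▸ Module.finrank_pos)

namespace AlgHom

variable {k E ι : Type*} [Field k] [Field E] [Algebra k E] [Fintype ι] [DecidableEq ι]

def mulVecOrbit (φ : E →ₐ[k] Matrix ι ι k) (v : ι → k) : E →ₗ[k] ι → k :=
  LinearMap.applyₗ v ∘ₗ (Matrix.toLin' : Matrix ι ι k ≃ₗ[k] _).toLinearMap ∘ₗ
    φ.toLinearMap

variable (φ : E →ₐ[k] Matrix ι ι k) {v : ι → k}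

@[simp]
theorem mulVecOrbit_apply (v : ι → k) (z : E) : φ.mulVecOrbit v z = φ z *ᵥ v := rfl

theorem mulVecOrbit_mul (v : ι → k) (y z : E) :
    φ.mulVecOrbit v (y * z) = φ y *ᵥ φ.mulVecOrbit v z := by
  simp [Matrix.mulVec_mulVec]

theorem mulVecOrbit_injective (hv : v ≠ 0) : Function.Injective (φ.mulVecOrbit v) := by
  rw [← LinearMap.ker_eq_bot, LinearMap.ker_eq_bot']
  intro z hz
  by_contra hz0
  apply hv
  rw [← Matrix.one_mulVec v, ← map_one φ, ← inv_mul_cancel₀ hz0, ← mulVecOrbit_apply,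
    mulVecOrbit_mul, hz, Matrix.mulVec_zero]

variable [FiniteDimensional k E]

noncomputable def mulVecOrbitEquiv (hdim : Module.finrank k E = Fintype.card ι) (hv : v ≠ 0) :
    E ≃ₗ[k] ι → k :=
  LinearMap.linearEquivOfInjective _ (φ.mulVecOrbit_injective hv) (by simpa using hdim)

@[simp]
theorem mulVecOrbitEquiv_apply (hdim : Module.finrank k E = Fintype.card ι) (hv : v ≠ 0)
    (z : E) : φ.mulVecOrbitEquiv hdim hv z = φ z *ᵥ v := rfl

theorem mulVecOrbitEquiv_mul (hdim : Module.finrank k E = Fintype.card ι) (hv : v ≠ 0)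
    (y z : E) : φ.mulVecOrbitEquiv hdim hv (y * z) = φ y *ᵥ φ.mulVecOrbitEquiv hdim hv z :=
  φ.mulVecOrbit_mul v y z

theorem toLin'_eq_conj_lmul (hdim : Module.finrank k E = Fintype.card ι) (hv : v ≠ 0)
    (y : E) :
    Matrix.toLin' (φ y) =
      (φ.mulVecOrbitEquiv hdim hv).toLinearMap ∘ₗ Algebra.lmul k E y ∘ₗ
        (φ.mulVecOrbitEquiv hdim hv).symm.toLinearMap := by
  refine LinearMap.ext fun u => ?_
  obtain ⟨z, rfl⟩ := (φ.mulVecOrbitEquiv hdim hv).surjective u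
  rw [LinearMap.comp_apply, LinearMap.comp_apply, LinearEquiv.coe_coe, LinearEquiv.coe_coe,
    LinearEquiv.symm_apply_apply]
  simp [Matrix.mulVec_mulVec]

theorem det_apply_eq_norm (hdim : Module.finrank k E = Fintype.card ι) (y : E) :
    (φ y).det = Algebra.norm k y := by
  have := nonempty_of_finrank_eq_card hdim
  obtain ⟨v, hv⟩ := exists_ne (0 : ι → k)
  rw [← LinearMap.det_toLin', φ.toLin'_eq_conj_lmul hdim hv,
    LinearMap.det_conj, Algebra.norm_apply]

theorem exists_isUnit_det_intertwining (ψ : E →ₐ[k] Matrix ι ι k)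
    (hdim : Module.finrank k E = Fintype.card ι) :
    ∃ C : Matrix ι ι k, IsUnit C.det ∧ ∀ z, C * φ z = ψ z * C := by
  have := nonempty_of_finrank_eq_card hdim
  obtain ⟨v, hv⟩ := exists_ne (0 : ι → k)
  set e := (φ.mulVecOrbitEquiv hdim hv).symm.trans (ψ.mulVecOrbitEquiv hdim hv)
  refine ⟨LinearMap.toMatrix' e.toLinearMap, ?_, fun z => Matrix.toLin'.injective ?_⟩
  · rw [LinearMap.det_toMatrix']
    exact e.isUnit_det'
  refine LinearMap.ext fun u => ?_
  obtain ⟨w, rfl⟩ := (φ.mulVecOrbitEquiv hdim hv).surjective u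
  have he : ∀ w, e (φ.mulVecOrbitEquiv hdim hv w) = ψ.mulVecOrbitEquiv hdim hv w := fun w =>
    congrArg (ψ.mulVecOrbitEquiv hdim hv) ((φ.mulVecOrbitEquiv hdim hv).symm_apply_apply w)
  simp only [Matrix.toLin'_mul, Matrix.toLin'_toMatrix', LinearMap.comp_apply,
    Matrix.toLin'_apply, LinearEquiv.coe_coe, ← mulVecOrbitEquiv_mul, he]

theorem exists_det_eq_one_intertwining (ψ : E →ₐ[k] Matrix ι ι k)
    (hdim : Module.finrank k E = Fintype.card ι)
    (hnorm : ∀ c : k, c ≠ 0 → ∃ y : E, Algebra.norm k y = c) :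
    ∃ C : Matrix ι ι k, C.det = 1 ∧ ∀ z, C * φ z = ψ z * C := by
  obtain ⟨C, hCdet, hC⟩ := φ.exists_isUnit_det_intertwining ψ hdim
  obtain ⟨y, hy⟩ := hnorm C.det⁻¹ (inv_ne_zero hCdet.ne_zero)
  refine ⟨ψ y * C, ?_, fun z => ?_⟩
  · rw [Matrix.det_mul, ψ.det_apply_eq_norm hdim, hy, inv_mul_cancel₀ hCdet.ne_zero]
  · rw [Matrix.mul_assoc, hC, ← Matrix.mul_assoc, ← map_mul, mul_comm, map_mul,
      Matrix.mul_assoc]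

end AlgHom

theorem stmt11_general {k : Type*} [Field k]
    (A : Matrix (Fin 3) (Fin 3) k)
    (hirr : Irreducible A.charpoly)
    (E : Type*) [Field E] [Algebra k E]
    (x : E) (hx : Polynomial.aeval x A.charpoly = 0)
    (hdim : Module.finrank k E = 3)
    (hnorm : ∀ c : k, c ≠ 0 → ∃ y : E, y ≠ 0 ∧ Algebra.norm k y = c) :
    ∃ C : Matrix (Fin 3) (Fin 3) k, C.det = 1 ∧ C * A * C⁻¹ = Aᵀ := by
  have : FiniteDimensional k E := Module.finite_of_finrank_pos (by omega)
  have hmin : A.charpoly = minpoly k x :=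
    minpoly.eq_of_irreducible_of_monic hirr hx A.charpoly_monic
  have hint : IsIntegral k x := ⟨_, A.charpoly_monic, hx⟩
  have hgen : Algebra.adjoin k {x} = ⊤ :=
    Algebra.adjoin_singleton_eq_top_of_natDegree_minpoly_eq_finrank hint (by simp [← hmin, hdim])
  let pb := PowerBasis.ofAdjoinEqTop hint hgen
  let φ := pb.lift A (by rw [PowerBasis.ofAdjoinEqTop_gen, ← hmin, aeval_self_charpoly])
  let ψ := pb.lift Aᵀ
    (by rw [PowerBasis.ofAdjoinEqTop_gen, ← hmin, ← charpoly_transpose, aeval_self_charpoly])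
  obtain ⟨C, hCdet, hC⟩ := φ.exists_det_eq_one_intertwining ψ (by simpa using hdim)
    fun c hc => (hnorm c hc).imp fun _ => And.right
  refine ⟨C, hCdet, ?_⟩
  have hCA : C * A = Aᵀ * C := by
    simpa only [φ, ψ, PowerBasis.lift_gen] using hC pb.gen
  rw [hCA, mul_nonsing_inv_cancel_right _ _ (by simp [hCdet])]

/-- Let `A ∈ SL(3,k)` have irreducible characteristic polynomial
`χ_A`, and let `E = k[X]/(χ_A)` (realized as a cubic field extension of `k` with a
root `x` of `χ_A`). If every element of `k^×` is a norm from `E`, then `A` is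
conjugate to `ᵗA` by an element of `SL(3,k)`. -/
theorem stmt11 {k : Type*} [Field k]
    (A : Matrix (Fin 3) (Fin 3) k) (hA_det : A.det = 1)
    (hirr : Irreducible A.charpoly)
    (E : Type*) [Field E] [Algebra k E]
    (x : E) (hx : Polynomial.aeval x A.charpoly = 0)
    (hdim : Module.finrank k E = 3)
    (hnorm : ∀ c : k, c ≠ 0 → ∃ y : E, y ≠ 0 ∧ Algebra.norm k y = c) :
    ∃ C : Matrix (Fin 3) (Fin 3) k, C.det = 1 ∧ C * A * C⁻¹ = Aᵀ :=
  stmt11_general A hirr E x hx hdim hnorm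
end

section
/- Let A ∈ SL(n,k) have irreducible characteristic polynomial over k. Then A is conjugate to its transpose ᵗA by an element of SL(n,k) if and only if A is a product of two symmetric matrices belonging to SL(n,k). -/
/-!
Let `K = k[X]/(χ_A)`, a field of degree `n` over `k`. For a nonzero vector `v`, the map
`x ↦ x(A) v` identifies `K` with `kⁿ`, and in the corresponding basis of `K` the matrix of
multiplication by the root `α` is `A`. For a nonzero functional `f` on `K`, the Gram matrix `S`
of the form `(x, y) ↦ f (x y)` is invertible and `S L_y` is symmetric for every `y ∈ K`,
`L_y` being the matrix of multiplication by `y`. If `C A = Aᵀ C`, then `S⁻¹ C` commutes with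
`A = L_α`, hence is some `L_y` because `α` generates `K`, so `C = S L_y` is symmetric. Thus
`A = C⁻¹ (C A)` is a product of two symmetric matrices of determinant one; conversely, if
`A = S₁ S₂` then `S₂ A S₂⁻¹ = S₂ S₁ = Aᵀ`.
-/

open Matrix Polynomial

section

variable {k K : Type*} [Field k] [Field K] [Algebra k K]

def mulForm (f : Module.Dual k K) : LinearMap.BilinForm k K := (LinearMap.mul k K).compr₂ f

@[simp]
lemma mulForm_apply (f : Module.Dual k K) (x y : K) : mulForm f x y = f (x * y) := rfl

lemma mulForm_nondegenerate {f : Module.Dual k K} (hf : f ≠ 0) : (mulForm f).Nondegenerate := by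
  obtain ⟨z, hz⟩ := DFunLike.ne_iff.mp hf
  have key : ∀ x : K, (∀ y, f (x * y) = 0) → x = 0 := fun x hx ↦ by
    by_contra hx0
    exact hz (by simpa [mul_inv_cancel_left₀ hx0] using hx (x⁻¹ * z))
  exact ⟨fun x hx ↦ key x (by simpa using hx),
    fun x hx ↦ key x (by simpa [mul_comm] using hx)⟩

variable {ι : Type*} [Fintype ι] [DecidableEq ι] (b : Module.Basis ι k K)

lemma transpose_toMatrix_mulForm_mul_leftMulMatrix (f : Module.Dual k K) (y : K) :
    (LinearMap.BilinForm.toMatrix b (mulForm f) * Algebra.leftMulMatrix b y)ᵀ =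
      LinearMap.BilinForm.toMatrix b (mulForm f) * Algebra.leftMulMatrix b y := by
  rw [Algebra.leftMulMatrix_apply, ← LinearMap.BilinForm.toMatrix_compRight]
  ext i j
  simp only [transpose_apply, LinearMap.BilinForm.toMatrix_apply,
    LinearMap.BilinForm.compRight_apply, mulForm_apply, Algebra.coe_lmul_eq_mul,
    LinearMap.mul_apply']
  ring_nf

lemma exists_leftMulMatrix_eq_of_commute {α : K} (hα : Algebra.adjoin k {α} = ⊤)
    {D : Matrix ι ι k} (hD : Commute D (Algebra.leftMulMatrix b α)) :
    ∃ y, Algebra.leftMulMatrix b y = D := by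
  set g := (LinearMap.toMatrixAlgEquiv b).symm D
  have hlmul : ∀ y,
      LinearMap.toMatrixAlgEquiv b (Algebra.lmul k K y) = Algebra.leftMulMatrix b y :=
    fun _ ↦ rfl
  have hgα : Commute g (Algebra.lmul k K α) := by
    rw [← hlmul] at hD
    simpa only [AlgEquiv.symm_apply_apply] using hD.map (LinearMap.toMatrixAlgEquiv b).symm
  have hg : ∀ y, g y = y * g 1 := fun y ↦ by
    have hle : Algebra.adjoin k {α} ≤ (Subalgebra.centralizer k {g}).comap (Algebra.lmul k K) :=
      Algebra.adjoin_le <| Set.singleton_subset_iff.mpr <| by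
        simpa [Set.mem_centralizer_iff] using hgα.eq
    have hy := hle (hα ▸ Algebra.mem_top : y ∈ Algebra.adjoin k {α})
    simp only [Subalgebra.mem_comap, Subalgebra.mem_centralizer_iff k, Set.mem_singleton_iff,
      forall_eq] at hy
    simpa using congr($hy 1)
  refine ⟨g 1, ?_⟩
  have hg_lmul : Algebra.lmul k K (g 1) = g := LinearMap.ext fun y ↦ by
    rw [hg y, mul_comm]; rfl
  rw [← hlmul, hg_lmul, AlgEquiv.apply_symm_apply]

lemma transpose_eq_of_mul_leftMulMatrix_eq_transpose_mul {α : K}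
    (hα : Algebra.adjoin k {α} = ⊤) {C : Matrix ι ι k}
    (hC : C * Algebra.leftMulMatrix b α = (Algebra.leftMulMatrix b α)ᵀ * C) : Cᵀ = C := by
  obtain ⟨f, hf⟩ := exists_ne (0 : Module.Dual k K)
  set S := LinearMap.BilinForm.toMatrix b (mulForm f)
  set M := Algebra.leftMulMatrix b α
  have hS : Sᵀ = S := by
    simpa using transpose_toMatrix_mulForm_mul_leftMulMatrix b f 1
  have hSM : Mᵀ * S = S * M := by
    rw [← hS, ← transpose_mul, hS]
    exact transpose_toMatrix_mulForm_mul_leftMulMatrix b f α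
  have hSdet : IsUnit S.det :=
    ((LinearMap.BilinForm.nondegenerate_iff_det_ne_zero b).mp (mulForm_nondegenerate hf)).isUnit
  have hcomm : Commute (S⁻¹ * C) M := by
    calc S⁻¹ * C * M = S⁻¹ * (Mᵀ * S * (S⁻¹ * C)) := by
          rw [mul_assoc, hC, mul_assoc Mᵀ, mul_nonsing_inv_cancel_left _ _ hSdet]
      _ = M * (S⁻¹ * C) := by
          rw [hSM, mul_assoc, nonsing_inv_mul_cancel_left _ _ hSdet]
  obtain ⟨y, hy⟩ := exists_leftMulMatrix_eq_of_commute b hα hcomm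
  rw [← mul_nonsing_inv_cancel_left S C hSdet, ← hy,
    transpose_toMatrix_mulForm_mul_leftMulMatrix]

lemma exists_basis_leftMulMatrix_eq [FiniteDimensional k K] (ψ : K →ₐ[k] Matrix ι ι k)
    (hdim : Module.finrank k K = Fintype.card ι) :
    ∃ b : Module.Basis ι k K, Algebra.leftMulMatrix b = ψ := by
  have : Nonempty ι := Fintype.card_pos_iff.mp (hdim ▸ Module.finrank_pos)
  obtain ⟨v, hv⟩ := exists_ne (0 : ι → k)
  let θ : K →ₗ[k] ι → k := (mulVecBilin k k).flip v ∘ₗ ψ.toLinearMap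
  have hθ : ∀ x y, θ (x * y) = ψ x *ᵥ θ y := fun x y ↦ by
    simp [θ, mulVec_mulVec]
  have hinj : Function.Injective θ := by
    refine (injective_iff_map_eq_zero θ).mpr fun x hx ↦ by_contra fun hx0 ↦ hv ?_
    have h : θ (x⁻¹ * x) = 0 := by rw [hθ, hx, mulVec_zero]
    simpa [θ, inv_mul_cancel₀ hx0] using h
  have hrank : Module.finrank k K = Module.finrank k (ι → k) := by simp [hdim]
  let e := θ.linearEquivOfInjective hinj hrank
  refine ⟨.ofEquivFun e, AlgHom.ext fun x ↦ Matrix.ext fun i j ↦ ?_⟩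
  rw [Algebra.leftMulMatrix_eq_repr_mul, Module.Basis.ofEquivFun_repr_apply,
    Module.Basis.coe_ofEquivFun]
  change θ (x * e.symm (Pi.single j 1)) i = ψ x i j
  rw [hθ, ← θ.linearEquivOfInjective_apply hinj hrank, LinearEquiv.apply_symm_apply,
    mulVec_single_one]
  rfl

end

lemma Matrix.transpose_eq_of_mul_eq_transpose_mul {k ι : Type*} [Field k] [Fintype ι]
    [DecidableEq ι] {A : Matrix ι ι k} (hirr : Irreducible A.charpoly) {C : Matrix ι ι k}
    (hC : C * A = Aᵀ * C) : Cᵀ = C := by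
  have : Fact (Irreducible A.charpoly) := ⟨hirr⟩
  let pb := AdjoinRoot.powerBasis hirr.ne_zero
  have : FiniteDimensional k (AdjoinRoot A.charpoly) := pb.finite
  let ψ : AdjoinRoot A.charpoly →ₐ[k] Matrix ι ι k :=
    Ideal.Quotient.liftₐ _ (aeval A) fun p hp ↦
      aeval_eq_zero_of_dvd_aeval_eq_zero (Ideal.mem_span_singleton.mp hp) (aeval_self_charpoly A)
  obtain ⟨b, hb⟩ := exists_basis_leftMulMatrix_eq ψ
    (by rw [pb.finrank, AdjoinRoot.powerBasis_dim, charpoly_natDegree_eq_dim])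
  have hA : Algebra.leftMulMatrix b (AdjoinRoot.root A.charpoly) = A := by
    rw [hb]
    exact aeval_X A
  rw [← hA] at hC
  exact transpose_eq_of_mul_leftMulMatrix_eq_transpose_mul b AdjoinRoot.adjoinRoot_eq_top hC

/-- Let `A ∈ SL(n,k)` have irreducible characteristic polynomial over
`k`. Then `A` is conjugate to `ᵗA` by an element of `SL(n,k)` iff `A` is a product
of two symmetric matrices belonging to `SL(n,k)`. -/
theorem stmt12 {k : Type*} [Field k] {n : ℕ}
    (A : Matrix (Fin n) (Fin n) k) (hA_det : A.det = 1)
    (hirr : Irreducible A.charpoly) :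
    (∃ C : Matrix (Fin n) (Fin n) k, C.det = 1 ∧ C * A * C⁻¹ = Aᵀ) ↔
    (∃ S₁ S₂ : Matrix (Fin n) (Fin n) k,
      S₁ᵀ = S₁ ∧ S₂ᵀ = S₂ ∧ S₁.det = 1 ∧ S₂.det = 1 ∧ A = S₁ * S₂) := by
  constructor
  · rintro ⟨C, hCdet, hconj⟩
    have hCunit : IsUnit C.det := hCdet ▸ isUnit_one
    have hCA : C * A = Aᵀ * C := by
      rw [← hconj, nonsing_inv_mul_cancel_right _ _ hCunit]
    have hCsymm : Cᵀ = C := transpose_eq_of_mul_eq_transpose_mul hirr hCA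
    refine ⟨C⁻¹, C * A, ?_, ?_, ?_, ?_, ?_⟩
    · rw [transpose_nonsing_inv, hCsymm]
    · rw [transpose_mul, hCsymm, hCA]
    · rw [det_nonsing_inv, hCdet, Ring.inverse_one]
    · rw [det_mul, hCdet, hA_det, one_mul]
    · rw [nonsing_inv_mul_cancel_left _ _ hCunit]
  · rintro ⟨S₁, S₂, hS₁, hS₂, -, hdet₂, rfl⟩
    refine ⟨S₂, hdet₂, ?_⟩
    rw [transpose_mul, hS₁, hS₂, ← mul_assoc,
      mul_nonsing_inv_cancel_right _ _ (hdet₂ ▸ isUnit_one)]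
end

section
/- Let S be a symmetric matrix in SL(3,k) whose characteristic polynomial p(X) is irreducible over k, and let E = k[X]/(p(X)), the degree three field extension of k determined by p(X). Suppose k^×/N_{E/k}(E^×) is nontrivial, i.e., there exists c ∈ k^× with c ∉ N_{E/k}(E^×). Then there exists a matrix A ∈ SL(3,k) with characteristic polynomial p(X) which is not a product of two symmetric matrices belonging to SL(3,k). -/
/-!
Take `A = g⁻¹ M g`, where `M` is the matrix of multiplication by the root `x` in a basis of `E`.
If `A = S₁ S₂` with `S₁, S₂` symmetric, then `A S₁ = S₁ Aᵀ`, so `V = g S₁ gᵀ` satisfies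
`M V = V Mᵀ`. Multiplication by `x` is self-adjoint for the form `(a, b) ↦ φ (a b)` of any
nonzero functional `φ`, so its Gram matrix `G` satisfies `Mᵀ G = G M`. Hence `V G` commutes
with `M`; as `x` generates `E`, it is the matrix of multiplication by some `w`, and
`det V · det G = N(w)`. Choosing `det g = c · det G`, the condition `det S₁ = 1` becomes
`N(w) · c = (c · det G)³`, which exhibits `c` as a norm.
-/

open Matrix Polynomial

namespace Matrix

variable {n R : Type*} [Fintype n] [CommRing R]

theorem mul_mul_eq_mul_transpose_of_transpose_eq {S₁ S₂ : Matrix n n R} (h₁ : S₁ᵀ = S₁)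
    (h₂ : S₂ᵀ = S₂) : S₁ * S₂ * S₁ = S₁ * (S₁ * S₂)ᵀ := by
  rw [transpose_mul, h₁, h₂, mul_assoc]

theorem mul_congr_eq_congr_mul_transpose {M A g S : Matrix n n R} (hg : M * g = g * A)
    (hS : A * S = S * Aᵀ) : M * (g * S * gᵀ) = g * S * gᵀ * Mᵀ := by
  calc M * (g * S * gᵀ) = g * (A * S) * gᵀ := by rw [← mul_assoc, ← mul_assoc, hg, mul_assoc g]
    _ = g * S * (M * g)ᵀ := by rw [hS, hg, transpose_mul, mul_assoc, mul_assoc, mul_assoc]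
    _ = g * S * gᵀ * Mᵀ := by rw [transpose_mul, mul_assoc (g * S)]

end Matrix

theorem Module.End.eq_lmul_of_commute {k E : Type*} [CommRing k] [CommRing E] [Algebra k E]
    {x : E} (hx : Algebra.adjoin k {x} = ⊤) {f : Module.End k E}
    (hf : Commute f (Algebra.lmul k E x)) : f = Algebra.lmul k E (f 1) := by
  have hle : Algebra.adjoin k {x} ≤ (Subalgebra.centralizer k {f}).comap (Algebra.lmul k E) :=
    Algebra.adjoin_le (Set.singleton_subset_iff.2 fun g hg => by
      rw [Set.mem_singleton_iff.1 hg]; exact hf.eq)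
  ext a
  have hcomm : f * Algebra.lmul k E a = Algebra.lmul k E a * f :=
    hle (hx ▸ Algebra.mem_top) f rfl
  simpa [mul_comm a] using LinearMap.congr_fun hcomm 1

namespace Algebra

variable {k E ι : Type*} [Fintype ι] [DecidableEq ι]

section CommRing

variable [CommRing k] [CommRing E] [Algebra k E]

def mulForm (φ : E →ₗ[k] k) : LinearMap.BilinForm k E :=
  (LinearMap.mul k E).compr₂ φ

@[simp]
theorem mulForm_apply (φ : E →ₗ[k] k) (a c : E) : mulForm φ a c = φ (a * c) :=
  rfl

variable (b : Module.Basis ι k E)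

theorem exists_leftMulMatrix_eq_of_commute {x : E} (hx : adjoin k {x} = ⊤) {W : Matrix ι ι k}
    (hW : Commute W (leftMulMatrix b x)) : ∃ w, leftMulMatrix b w = W := by
  refine ⟨Matrix.toLin b b W 1, ?_⟩
  have hf : Commute (Matrix.toLin b b W) (lmul k E x) := by
    apply (LinearMap.toMatrix b b).injective
    rw [LinearMap.toMatrix_mul, LinearMap.toMatrix_mul, ← leftMulMatrix_apply,
      LinearMap.toMatrix_toLin]
    exact hW.eq
  rw [leftMulMatrix_apply, ← Module.End.eq_lmul_of_commute hx hf, LinearMap.toMatrix_toLin]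

theorem leftMulMatrix_transpose_mul_toMatrix_mulForm (φ : E →ₗ[k] k) (x : E) :
    (leftMulMatrix b x)ᵀ * LinearMap.BilinForm.toMatrix b (mulForm φ) =
      LinearMap.BilinForm.toMatrix b (mulForm φ) * leftMulMatrix b x := by
  rw [leftMulMatrix_apply, ← LinearMap.BilinForm.toMatrix_compLeft,
    ← LinearMap.BilinForm.toMatrix_compRight]
  congr 1
  ext a c
  simp [mul_assoc, mul_left_comm]

theorem exists_norm_eq_det_mul_det_mulForm {x : E} (hx : adjoin k {x} = ⊤) (φ : E →ₗ[k] k)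
    {V : Matrix ι ι k} (hV : leftMulMatrix b x * V = V * (leftMulMatrix b x)ᵀ) :
    ∃ w : E, norm k w = V.det * (LinearMap.BilinForm.toMatrix b (mulForm φ)).det := by
  obtain ⟨w, hw⟩ := exists_leftMulMatrix_eq_of_commute b hx
    (W := V * LinearMap.BilinForm.toMatrix b (mulForm φ)) <| by
      change _ * _ = _ * _
      rw [mul_assoc, ← leftMulMatrix_transpose_mul_toMatrix_mulForm, ← mul_assoc, ← hV,
        mul_assoc]
  exact ⟨w, by rw [norm_eq_matrix_det b, hw, det_mul]⟩

theorem exists_norm_eq_of_conj_leftMulMatrix_eq_mul {x : E} (hx : adjoin k {x} = ⊤)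
    (φ : E →ₗ[k] k) (g : GL ι k) {S₁ S₂ : Matrix ι ι k} (h₁ : S₁ᵀ = S₁) (h₂ : S₂ᵀ = S₂)
    (h : (g : Matrix ι ι k)⁻¹ * leftMulMatrix b x * g = S₁ * S₂) :
    ∃ w : E, norm k w =
      (g : Matrix ι ι k).det ^ 2 * S₁.det * (LinearMap.BilinForm.toMatrix b (mulForm φ)).det := by
  have hg : leftMulMatrix b x * g = g * ((g : Matrix ι ι k)⁻¹ * leftMulMatrix b x * g) := by
    rw [← coe_units_inv, ← mul_assoc, ← mul_assoc, Units.mul_inv, one_mul]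
  obtain ⟨w, hw⟩ := exists_norm_eq_det_mul_det_mulForm b hx φ <|
    mul_congr_eq_congr_mul_transpose hg <| by
      rw [h]; exact mul_mul_eq_mul_transpose_of_transpose_eq h₁ h₂
  exact ⟨w, by rw [hw, det_mul, det_mul, det_transpose]; ring⟩

end CommRing

theorem charpoly_leftMulMatrix_of_card_eq [Field k] [Ring E] [Algebra k E]
    (b : Module.Basis ι k E) (x : E) (h : Fintype.card ι = (minpoly k x).natDegree) :
    (leftMulMatrix b x).charpoly = minpoly k x := by
  have : Module.Finite k E := Module.Finite.of_basis b
  refine eq_of_monic_of_dvd_of_natDegree_le (minpoly.monic (.of_finite k x))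
    (charpoly_monic _) (minpoly.dvd k x ?_) (by rw [charpoly_natDegree_eq_dim, h])
  apply leftMulMatrix_injective b
  rw [← aeval_algHom_apply, aeval_self_charpoly, map_zero]

section Field

variable [Field k] [Field E] [Algebra k E]

theorem det_toMatrix_mulForm_ne_zero (b : Module.Basis ι k E) {φ : E →ₗ[k] k} (hφ : φ ≠ 0) :
    (LinearMap.BilinForm.toMatrix b (mulForm φ)).det ≠ 0 := by
  rw [← LinearMap.BilinForm.nondegenerate_iff_det_ne_zero]
  have hsep : ∀ a : E, (∀ e, φ (a * e) = 0) → a = 0 := fun a ha => by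
    by_contra ha0
    exact hφ (LinearMap.ext fun e => by simpa [mul_inv_cancel_left₀ ha0] using ha (a⁻¹ * e))
  exact ⟨fun a ha => hsep a (by simpa using ha), fun a ha => hsep a (by simpa [mul_comm] using ha)⟩

theorem exists_norm_eq_of_norm_mul_eq_pow [FiniteDimensional k E] {c t : k} (hc : c ≠ 0)
    (ht : t ≠ 0) {w : E} (hw : norm k w * c = (c * t) ^ Module.finrank k E) :
    ∃ y : E, y ≠ 0 ∧ norm k y = c := by
  have hNw : norm k w ≠ 0 := left_ne_zero_of_mul (hw ▸ pow_ne_zero _ (mul_ne_zero hc ht))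
  have hw0 : w ≠ 0 := by rintro rfl; simp at hNw
  refine ⟨algebraMap k E (c * t) * w⁻¹, by simp [hc, ht, hw0], mul_right_cancel₀ hNw ?_⟩
  calc norm k (algebraMap k E (c * t) * w⁻¹) * norm k w = norm k (algebraMap k E (c * t)) := by
        rw [← map_mul, mul_assoc, inv_mul_cancel₀ hw0, mul_one]
    _ = c * norm k w := by rw [Algebra.norm_algebraMap, ← hw, mul_comm]

end Field

end Algebra

theorem stmt13_general {k : Type*} [Field k]
    (S : Matrix (Fin 3) (Fin 3) k) (hS_det : S.det = 1)
    (hirr : Irreducible S.charpoly)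
    (E : Type*) [Field E] [Algebra k E]
    (x : E) (hx : Polynomial.aeval x S.charpoly = 0)
    (hdim : Module.finrank k E = 3)
    (hc : ∃ c : k, c ≠ 0 ∧ ¬ ∃ y : E, y ≠ 0 ∧ Algebra.norm k y = c) :
    ∃ A : Matrix (Fin 3) (Fin 3) k, A.det = 1 ∧ A.charpoly = S.charpoly ∧
      ¬ ∃ S₁ S₂ : Matrix (Fin 3) (Fin 3) k,
        S₁ᵀ = S₁ ∧ S₂ᵀ = S₂ ∧ S₁.det = 1 ∧ S₂.det = 1 ∧ A = S₁ * S₂ := by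
  obtain ⟨c, hc0, hcn⟩ := hc
  have : FiniteDimensional k E := Module.finite_of_finrank_eq_succ hdim
  have hmin : minpoly k x = S.charpoly :=
    (minpoly.eq_of_irreducible_of_monic hirr hx S.charpoly_monic).symm
  have hdeg : (minpoly k x).natDegree = 3 := by
    rw [hmin, charpoly_natDegree_eq_dim, Fintype.card_fin]
  have hgen : Algebra.adjoin k {x} = ⊤ :=
    Algebra.adjoin_eq_top_of_primitive_element (IsIntegral.of_finite k x).isAlgebraic
      ((Field.primitive_element_iff_minpoly_natDegree_eq k x).2 (hdeg.trans hdim.symm))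
  set b := Module.finBasisOfFinrankEq k E hdim
  set M := Algebra.leftMulMatrix b x
  obtain ⟨φ, hφ⟩ : ∃ φ : E →ₗ[k] k, φ ≠ 0 :=
    ⟨b.coord 0, fun h => by simpa using LinearMap.congr_fun h (b 0)⟩
  set t := (LinearMap.BilinForm.toMatrix b (Algebra.mulForm φ)).det
  have ht : t ≠ 0 := Algebra.det_toMatrix_mulForm_ne_zero b hφ
  obtain ⟨g, hg⟩ :=
    GeneralLinearGroup.det_surjective (n := Fin 3) (.mk0 (c * t) (mul_ne_zero hc0 ht))
  have hA : ((g : Matrix (Fin 3) (Fin 3) k)⁻¹ * M * g).charpoly = S.charpoly := by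
    rw [charpoly_units_conj',
      Algebra.charpoly_leftMulMatrix_of_card_eq b x (by rw [hdeg, Fintype.card_fin]), hmin]
  refine ⟨_, ?_, hA, ?_⟩
  · rw [det_eq_sign_charpoly_coeff, hA, ← det_eq_sign_charpoly_coeff, hS_det]
  · rintro ⟨S₁, S₂, h₁, h₂, hd₁, -, hS₁₂⟩
    obtain ⟨w, hw⟩ := Algebra.exists_norm_eq_of_conj_leftMulMatrix_eq_mul b hgen φ g h₁ h₂ hS₁₂
    have hgdet : (g : Matrix (Fin 3) (Fin 3) k).det = c * t := congrArg Units.val hg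
    exact hcn (Algebra.exists_norm_eq_of_norm_mul_eq_pow hc0 ht (w := w)
      (by rw [hw, hdim, hd₁, hgdet]; ring))

/-- Let `S` be a symmetric matrix in `SL(3,k)` with irreducible
characteristic polynomial `p`, and let `E = k[X]/(p)` (realized as a cubic field
extension of `k` with a root `x` of `p`). If some `c ∈ k^×` is not a norm from `E`,
then there exists `A ∈ SL(3,k)` with characteristic polynomial `p` which is not a
product of two symmetric matrices belonging to `SL(3,k)`. -/
theorem stmt13 {k : Type*} [Field k]
    (S : Matrix (Fin 3) (Fin 3) k) (hS_symm : Sᵀ = S) (hS_det : S.det = 1)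
    (hirr : Irreducible S.charpoly)
    (E : Type*) [Field E] [Algebra k E]
    (x : E) (hx : Polynomial.aeval x S.charpoly = 0)
    (hdim : Module.finrank k E = 3)
    (hc : ∃ c : k, c ≠ 0 ∧ ¬ ∃ y : E, y ≠ 0 ∧ Algebra.norm k y = c) :
    ∃ A : Matrix (Fin 3) (Fin 3) k, A.det = 1 ∧ A.charpoly = S.charpoly ∧
      ¬ ∃ S₁ S₂ : Matrix (Fin 3) (Fin 3) k,
        S₁ᵀ = S₁ ∧ S₂ᵀ = S₂ ∧ S₁.det = 1 ∧ S₂.det = 1 ∧ A = S₁ * S₂ :=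
  stmt13_general S hS_det hirr E x hx hdim hc
end

section
/- Let p be an odd prime. Then there exists a matrix A ∈ SL(3,ℚ_p) whose characteristic polynomial is irreducible over ℚ_p and which is not a product of two symmetric matrices belonging to SL(3,ℚ_p); in particular, A is not conjugate to its transpose ᵗA by any element of SL(3,ℚ_p). -/
/-!
Let `f = X³ + aX² + bX - 1 ∈ ℤ_p[X]` reduce to an irreducible cubic over `𝔽_p` (one exists: the
minimal polynomial of `g ^ (p - 1)` for a generator `g` of `𝔽_{p³}ˣ`), and let `A₀` be its
companion matrix, so `A₀ ∈ SL(3, ℤ_p)`. Take `A = M A₀ M⁻¹` with `M = diag(p, 1, 1)`.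
If `C A C⁻¹ = ᵗA` with `det C = 1`, then `D = ᵗM C M` satisfies `D A₀ = ᵗA₀ D` and
`det D = p²`. A fixed symmetric `S` with `det S = -1` also satisfies `S A₀ = ᵗA₀ S`, so `S⁻¹ D`
commutes with the cyclic matrix `A₀` and hence equals `g(A₀)` with `deg g ≤ 2`. After scaling `g`
to be primitive over `ℤ_p`, `g(A₀)` is invertible modulo `p` because `f` is irreducible there;
hence `|det g(A₀)|` is a cube of a `p`-adic absolute value, which `|p²|` is not.
A factorisation `A = S₁ S₂` into symmetric matrices of `SL(3, ℚ_p)` would give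
`S₁⁻¹ A S₁ = S₂ S₁ = ᵗA`.
-/

open Matrix Polynomial Module IntermediateField

theorem Algebra.norm_eq_neg_one_pow_mul_coeff_zero_minpoly {K L : Type*} [Field K] [Field L]
    [Algebra K L] [FiniteDimensional K L] {x : L}
    (hx : (minpoly K x).natDegree = finrank K L) :
    Algebra.norm K x = (-1) ^ finrank K L * (minpoly K x).coeff 0 := by
  have hint : IsIntegral K x := .of_finite K x
  have hrank : finrank K⟮x⟯ L = 1 := by
    have h := Module.finrank_mul_finrank K K⟮x⟯ L
    rw [IntermediateField.adjoin.finrank hint, hx] at h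
    exact (Nat.mul_eq_left Module.finrank_pos.ne').mp h
  rw [Algebra.norm_eq_norm_adjoin K x, hrank, pow_one,
    ← IntermediateField.adjoin.powerBasis_gen hint, PowerBasis.norm_gen_eq_coeff_zero_minpoly,
    IntermediateField.adjoin.powerBasis_dim, IntermediateField.adjoin.powerBasis_gen hint,
    IntermediateField.minpoly_gen, hx]

theorem Polynomial.Monic.eq_cubic {R : Type*} [CommRing R] {f : R[X]} (hf : f.Monic)
    (hdeg : f.natDegree = 3) :
    f = X ^ 3 + C (f.coeff 2) * X ^ 2 + C (f.coeff 1) * X + C (f.coeff 0) := by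
  conv_lhs => rw [hf.as_sum, hdeg]
  simp only [Finset.sum_range_succ, Finset.sum_range_zero]
  ring

theorem ZMod.exists_irreducible_cubic_coeff_zero_eq_neg_one (p : ℕ) [Fact p.Prime] :
    ∃ a b : ZMod p, Irreducible (X ^ 3 + C a * X ^ 2 + C b * X - 1 : (ZMod p)[X]) := by
  let L := GaloisField p 3
  have hrank : finrank (ZMod p) L = 3 := GaloisField.finrank p three_ne_zero
  obtain ⟨g, hg⟩ := IsCyclic.exists_ofOrder_eq_natCard (α := Lˣ)
  rw [Nat.card_units, GaloisField.card p 3 three_ne_zero] at hg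
  set y : L := (g : L) ^ (p - 1)
  have hy_norm : Algebra.norm (ZMod p) y = 1 := by
    rw [map_pow]
    exact ZMod.pow_card_sub_one_eq_one (Algebra.norm_ne_zero_iff.mpr g.ne_zero)
  have hy_not_mem : y ∉ (algebraMap (ZMod p) L).range := by
    rintro ⟨c, hc⟩
    have hc0 : c ≠ 0 := by
      rintro rfl
      exact pow_ne_zero _ g.ne_zero (hc.symm.trans (map_zero _))
    have h1 : g ^ ((p - 1) * (p - 1)) = 1 := by
      ext
      rw [Units.val_pow_eq_pow_val, pow_mul, show (g : L) ^ (p - 1) = _ from hc.symm,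
        ← map_pow, ZMod.pow_card_sub_one_eq_one hc0, map_one, Units.val_one]
    have h2 := (Fact.out : p.Prime).two_le
    have hlt : (p - 1) * (p - 1) < p ^ 3 - 1 := by
      obtain ⟨q, rfl⟩ : ∃ q, p = q + 2 := ⟨p - 2, by omega⟩
      rw [show q + 2 - 1 = q + 1 by omega]
      have : (q + 1) * (q + 1) + 1 < (q + 2) ^ 3 := by nlinarith
      omega
    exact hlt.not_ge (hg ▸ Nat.le_of_dvd (Nat.mul_pos (by omega) (by omega))
      (orderOf_dvd_of_pow_eq_one h1))
  have hint : IsIntegral (ZMod p) y := .of_finite _ y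
  have hdeg : (minpoly (ZMod p) y).natDegree = 3 := by
    rcases Nat.prime_three.eq_one_or_self_of_dvd _ (hrank ▸ minpoly.degree_dvd hint) with h | h
    · exact absurd (minpoly.natDegree_eq_one_iff.mp h) hy_not_mem
    · exact h
  have hcoeff : (minpoly (ZMod p) y).coeff 0 = -1 := by
    have h := Algebra.norm_eq_neg_one_pow_mul_coeff_zero_minpoly (hdeg.trans hrank.symm)
    rw [hy_norm, hrank] at h
    linear_combination h
  have hirr := minpoly.irreducible hint
  rw [(minpoly.monic hint).eq_cubic hdeg, hcoeff, C_neg, C_1, ← sub_eq_add_neg] at hirr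
  exact ⟨_, _, hirr⟩

theorem Polynomial.isUnit_aeval_of_isCoprime {K A : Type*} [CommRing K] [Ring A] [Algebra K A]
    {f g : K[X]} {x : A} (hfg : IsCoprime f g) (hf : aeval x f = 0) : IsUnit (aeval x g) := by
  obtain ⟨u, v, huv⟩ := hfg
  have hv : aeval x v * aeval x g = 1 := by
    simpa [hf] using congrArg (aeval x) huv
  refine ⟨⟨aeval x g, aeval x v, ?_, hv⟩, rfl⟩
  rwa [← map_mul, mul_comm, map_mul]

section Intertwine

variable {n K : Type*} [Fintype n] [CommRing K]

theorem Matrix.map_aeval {S : Type*} [CommRing S] [DecidableEq n] (f : K →+* S)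
    (A : Matrix n n K) (g : K[X]) :
    (aeval A g).map f = aeval (A.map f) (g.map f) :=
  map_aeval_eq_aeval_map (ψ := f.mapMatrix) (by ext : 1; simp [algebraMap_eq_diagonal]) g A

theorem Matrix.charpoly_conj [DecidableEq n] {M : Matrix n n K} (h : IsUnit M)
    (N : Matrix n n K) : (M * N * M⁻¹).charpoly = N.charpoly := by
  rw [← h.unit_spec, charpoly_units_conj]

theorem Matrix.commute_inv_mul_of_mul_eq_transpose_mul [DecidableEq n] {A S D : Matrix n n K}
    (hS : IsUnit S.det) (hSA : S * A = Aᵀ * S) (hDA : D * A = Aᵀ * D) :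
    Commute (S⁻¹ * D) A := by
  calc S⁻¹ * D * A = S⁻¹ * (Aᵀ * S) * (S⁻¹ * D) := by
        rw [Matrix.mul_assoc, hDA, Matrix.mul_assoc, Matrix.mul_assoc, ← Matrix.mul_assoc S,
          mul_nonsing_inv _ hS, Matrix.one_mul]
    _ = A * (S⁻¹ * D) := by
        rw [← hSA, ← Matrix.mul_assoc S⁻¹ S A, nonsing_inv_mul _ hS, Matrix.one_mul]

theorem Matrix.transpose_mul_mul_mul_eq {A A₀ M D : Matrix n n K}
    (hM : M * A₀ = A * M) (hDA : D * A = Aᵀ * D) :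
    Mᵀ * D * M * A₀ = A₀ᵀ * (Mᵀ * D * M) := by
  calc Mᵀ * D * M * A₀ = Mᵀ * (D * A) * M := by simp only [Matrix.mul_assoc, hM]
    _ = (A * M)ᵀ * D * M := by rw [hDA, transpose_mul]; simp only [Matrix.mul_assoc]
    _ = A₀ᵀ * (Mᵀ * D * M) := by rw [← hM, transpose_mul]; simp only [Matrix.mul_assoc]

theorem Matrix.inv_mul_mul_self_eq_transpose_of_symm [DecidableEq n] {S₁ S₂ : Matrix n n K}
    (h₁ : S₁ᵀ = S₁) (h₂ : S₂ᵀ = S₂) (hdet : IsUnit S₁.det) :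
    S₁⁻¹ * (S₁ * S₂) * S₁⁻¹⁻¹ = (S₁ * S₂)ᵀ := by
  rw [nonsing_inv_nonsing_inv _ hdet, ← Matrix.mul_assoc, nonsing_inv_mul _ hdet,
    Matrix.one_mul, transpose_mul, h₁, h₂]

end Intertwine

section Companion

variable {R : Type*} [CommRing R]

def cubicCompanion (a b : R) : Matrix (Fin 3) (Fin 3) R := !![0, 0, 1; 1, 0, -b; 0, 1, -a]

theorem det_cubicCompanion (a b : R) : (cubicCompanion a b).det = 1 := by
  simp [cubicCompanion, det_fin_three]

theorem charpoly_cubicCompanion (a b : R) :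
    (cubicCompanion a b).charpoly = X ^ 3 + C a * X ^ 2 + C b * X - 1 := by
  simp only [charpoly, cubicCompanion, det_fin_three, charmatrix_apply_eq, charmatrix_apply_ne,
    of_apply, cons_val', cons_val_zero, cons_val_one, cons_val, cons_val_fin_one, ne_eq,
    Fin.reduceEq, not_false_eq_true, map_zero, map_one, map_neg, sub_zero, sub_neg_eq_add,
    neg_neg, neg_zero, X_mul_C, mul_neg, neg_mul, mul_one, one_mul, zero_mul, mul_zero, add_zero]
  ring

theorem cubicCompanion_map {S : Type*} [CommRing S] (f : R →+* S) (a b : R) :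
    (cubicCompanion a b).map f = cubicCompanion (f a) (f b) := by
  ext i j
  fin_cases i <;> fin_cases j <;> simp [cubicCompanion]

theorem exists_det_eq_neg_one_mul_cubicCompanion_eq_transpose_mul (a b : R) :
    ∃ S : Matrix (Fin 3) (Fin 3) R,
      S.det = -1 ∧ S * cubicCompanion a b = (cubicCompanion a b)ᵀ * S := by
  refine ⟨!![b, 1, 0; 1, 0, 0; 0, 0, 1], by simp [det_fin_three], ?_⟩
  ext i j
  fin_cases i <;> fin_cases j <;> simp [cubicCompanion, mul_apply, Fin.sum_univ_three]

theorem eq_aeval_cubicCompanion_of_commute {a b : R} {B : Matrix (Fin 3) (Fin 3) R}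
    (h : Commute B (cubicCompanion a b)) :
    B = aeval (cubicCompanion a b) (C (B 0 0) + C (B 1 0) * X + C (B 2 0) * X ^ 2) := by
  have e : ∀ i j, (B * cubicCompanion a b) i j = (cubicCompanion a b * B) i j := by
    simp [h.eq]
  have e00 := e 0 0; have e01 := e 0 1; have e10 := e 1 0
  have e20 := e 2 0; have e21 := e 2 1; have e22 := e 2 2
  simp [cubicCompanion, mul_apply, Fin.sum_univ_three] at e00 e01 e10 e20 e21 e22
  ext i j
  fin_cases i <;> fin_cases j <;>
    simp [cubicCompanion, pow_two, one_apply, Algebra.algebraMap_eq_smul_one] <;>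
  [ (linear_combination e00);
    (linear_combination e01 + e20);
    (linear_combination e10);
    (linear_combination -e22 - b * e20);
    (linear_combination e20);
    (linear_combination e21 + e10 - a * e20)]

end Companion

theorem Padic.norm_pow_ne_norm_p_pow {p : ℕ} [Fact p.Prime] {e : ℚ_[p]} (he : e ≠ 0) {n k : ℕ}
    (hnk : ¬ n ∣ k) : ‖e‖ ^ n ≠ ‖(p : ℚ_[p])‖ ^ k := by
  have hp : (1 : ℝ) < p := by exact_mod_cast (Fact.out : p.Prime).one_lt
  rw [Padic.norm_eq_zpow_neg_valuation he, Padic.norm_p, ← zpow_natCast, ← _root_.zpow_mul,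
    inv_pow, ← zpow_natCast, ← _root_.zpow_neg]
  intro h
  have := zpow_right_injective₀ (by linarith) hp.ne' h
  exact hnk (Int.natCast_dvd_natCast.mp ⟨e.valuation, by linarith⟩)

namespace PadicInt

variable {p : ℕ} [Fact p.Prime]

theorem norm_eq_one_iff_toZMod_ne_zero {x : ℤ_[p]} : ‖x‖ = 1 ↔ toZMod x ≠ 0 := by
  rw [← isUnit_iff, ← IsLocalRing.notMem_maximalIdeal, ← ker_toZMod, RingHom.mem_ker]

section Matrix

variable {n : Type*} [Fintype n] [DecidableEq n]

theorem irreducible_charpoly_map_coe {A : Matrix n n ℤ_[p]}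
    (hA : Irreducible (A.map toZMod).charpoly) : Irreducible (A.map Coe.ringHom).charpoly := by
  rw [charpoly_map] at hA ⊢
  exact (charpoly_monic A).irreducible_iff_irreducible_map_fraction_map.mp
    ((charpoly_monic A).irreducible_of_irreducible_map _ _ hA)

theorem norm_det_aeval_eq_one {A : Matrix n n ℤ_[p]} (hA : Irreducible (A.map toZMod).charpoly)
    {g : ℤ_[p][X]} (hg : g.map toZMod ≠ 0) (hdeg : g.natDegree < Fintype.card n) :
    ‖(aeval A g).det‖ = 1 := by
  have hcop : IsCoprime (A.map toZMod).charpoly (g.map toZMod) := by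
    refine hA.coprime_iff_not_dvd.mpr fun hdvd => ?_
    have := natDegree_le_of_dvd hdvd hg
    rw [charpoly_natDegree_eq_dim] at this
    exact (natDegree_map_le.trans_lt hdeg).not_ge this
  rw [norm_eq_one_iff_toZMod_ne_zero, RingHom.map_det, RingHom.mapMatrix_apply, Matrix.map_aeval]
  have h : IsUnit (aeval (A.map toZMod) (g.map toZMod)) :=
    isUnit_aeval_of_isCoprime hcop (aeval_self_charpoly _)
  exact ((isUnit_iff_isUnit_det _).mp h).ne_zero

theorem exists_norm_det_aeval_map_eq_pow {A : Matrix n n ℤ_[p]}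
    (hA : Irreducible (A.map toZMod).charpoly) {g : ℚ_[p][X]} (hg : g ≠ 0)
    (hdeg : g.natDegree < Fintype.card n) :
    ∃ e : ℚ_[p], e ≠ 0 ∧ ‖(aeval (A.map Coe.ringHom) g).det‖ = ‖e‖ ^ Fintype.card n := by
  obtain ⟨i, hi, hmax⟩ :=
    g.support.exists_max_image (fun j => ‖g.coeff j‖) (support_nonempty.mpr hg)
  set e := g.coeff i
  have he : e ≠ 0 := mem_support_iff.mp hi
  have hle (j : ℕ) : ‖g.coeff j‖ ≤ ‖e‖ := by
    by_cases hj : j ∈ g.support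
    · exact hmax j hj
    · simp [notMem_support_iff.mp hj]
  -- Dividing by a coefficient of maximal norm makes `g` integral with a unit coefficient.
  obtain ⟨h, hh⟩ : ∃ h : ℤ_[p][X], h.map Coe.ringHom = C e⁻¹ * g := by
    refine (mem_lifts _).mp ((lifts_iff_coeff_lifts _).mpr fun j =>
      ⟨⟨e⁻¹ * g.coeff j, ?_⟩, (coeff_C_mul _).symm⟩)
    rw [norm_mul, norm_inv]
    exact inv_mul_le_one_of_le₀ (hle j) (norm_nonneg _)
  have hinj : Function.Injective (Coe.ringHom : ℤ_[p] →+* ℚ_[p]) := Subtype.coe_injective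
  have hhi : h.coeff i = 1 := by
    apply hinj
    simpa [e, he] using congrArg (coeff · i) hh
  have hnorm : ‖(aeval A h).det‖ = 1 := by
    refine norm_det_aeval_eq_one hA (fun h0 => ?_) ?_
    · simpa [hhi] using congrArg (coeff · i) h0
    · rw [← natDegree_map_eq_of_injective hinj, hh]
      exact natDegree_C_mul_le _ _ |>.trans_lt hdeg
  have hdet : ‖(aeval A h).det‖ =
      ‖e‖⁻¹ ^ Fintype.card n * ‖(aeval (A.map Coe.ringHom) g).det‖ := by
    change ‖Coe.ringHom (aeval A h).det‖ = _
    rw [RingHom.map_det, RingHom.mapMatrix_apply, Matrix.map_aeval, hh, map_mul, aeval_C,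
      Algebra.algebraMap_eq_smul_one, smul_mul_assoc, one_mul, det_smul, norm_mul, norm_pow,
      norm_inv]
  refine ⟨e, he, ?_⟩
  rw [hnorm, inv_pow, eq_comm, inv_mul_eq_one₀ (pow_ne_zero _ (norm_ne_zero_iff.mpr he))] at hdet
  exact hdet.symm

end Matrix

theorem exists_norm_det_eq_pow_three_of_mul_cubicCompanion_eq {a b : ℤ_[p]}
    (hirr : Irreducible ((cubicCompanion a b).map toZMod).charpoly)
    {D : Matrix (Fin 3) (Fin 3) ℚ_[p]}
    (hD : D * (cubicCompanion a b).map Coe.ringHom = ((cubicCompanion a b).map Coe.ringHom)ᵀ * D)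
    (hdet : D.det ≠ 0) :
    ∃ e : ℚ_[p], e ≠ 0 ∧ ‖D.det‖ = ‖e‖ ^ 3 := by
  rw [cubicCompanion_map] at hD
  obtain ⟨S, hS, hSA⟩ := exists_det_eq_neg_one_mul_cubicCompanion_eq_transpose_mul
    (Coe.ringHom a) (Coe.ringHom b)
  have hSunit : IsUnit S.det := hS ▸ isUnit_one.neg
  set B := S⁻¹ * D
  set g : ℚ_[p][X] := C (B 0 0) + C (B 1 0) * X + C (B 2 0) * X ^ 2
  have hB : B = aeval (cubicCompanion (Coe.ringHom a) (Coe.ringHom b)) g :=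
    eq_aeval_cubicCompanion_of_commute (commute_inv_mul_of_mul_eq_transpose_mul hSunit hSA hD)
  have hdetB : B.det = -D.det := by simp [B, hS]
  have hg : g ≠ 0 := by
    rintro h0
    rw [h0, map_zero] at hB
    simp [hB, hdet] at hdetB
  obtain ⟨e, he, hnorm⟩ := exists_norm_det_aeval_map_eq_pow hirr hg
    (by rw [Fintype.card_fin]; exact Nat.lt_succ_of_le (by simp only [g]; compute_degree))
  rw [cubicCompanion_map, ← hB, hdetB, norm_neg, Fintype.card_fin] at hnorm
  exact ⟨e, he, hnorm⟩

end PadicInt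

theorem stmt14_general (p : ℕ) [Fact p.Prime] :
    ∃ A : Matrix (Fin 3) (Fin 3) ℚ_[p], A.det = 1 ∧ Irreducible A.charpoly ∧
      (¬ ∃ S₁ S₂ : Matrix (Fin 3) (Fin 3) ℚ_[p],
        S₁ᵀ = S₁ ∧ S₂ᵀ = S₂ ∧ S₁.det = 1 ∧ S₂.det = 1 ∧ A = S₁ * S₂) ∧
      (¬ ∃ C : Matrix (Fin 3) (Fin 3) ℚ_[p], C.det = 1 ∧ C * A * C⁻¹ = Aᵀ) := by
  obtain ⟨a, b, hirr⟩ := ZMod.exists_irreducible_cubic_coeff_zero_eq_neg_one p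
  obtain ⟨a, rfl⟩ := ZMod.ringHom_surjective PadicInt.toZMod a
  obtain ⟨b, rfl⟩ := ZMod.ringHom_surjective PadicInt.toZMod b
  rw [← charpoly_cubicCompanion, ← cubicCompanion_map] at hirr
  set A₀ := (cubicCompanion a b).map PadicInt.Coe.ringHom with hA₀
  set M : Matrix (Fin 3) (Fin 3) ℚ_[p] := diagonal ![(p : ℚ_[p]), 1, 1]
  have hp : (p : ℚ_[p]) ≠ 0 := Nat.cast_ne_zero.mpr (Fact.out : p.Prime).ne_zero
  have hM : IsUnit M.det := by simp [M, Fin.prod_univ_three, hp]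
  have hMunit : IsUnit M := (isUnit_iff_isUnit_det M).mpr hM
  have hnonconj : ¬ ∃ C, C.det = 1 ∧ C * (M * A₀ * M⁻¹) * C⁻¹ = (M * A₀ * M⁻¹)ᵀ := by
    rintro ⟨C, hC, hCA⟩
    have hCA' : C * (M * A₀ * M⁻¹) = (M * A₀ * M⁻¹)ᵀ * C := by
      rw [← hCA, nonsing_inv_mul_cancel_right _ _ (hC ▸ isUnit_one)]
    have hdet : (Mᵀ * C * M).det = (p : ℚ_[p]) ^ 2 := by simp [M, hC, Fin.prod_univ_three, sq]
    obtain ⟨e, he, hnorm⟩ := PadicInt.exists_norm_det_eq_pow_three_of_mul_cubicCompanion_eq hirr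
      (transpose_mul_mul_mul_eq (nonsing_inv_mul_cancel_right _ _ hM).symm hCA')
      (by simp [hdet, hp])
    exact Padic.norm_pow_ne_norm_p_pow he (by norm_num : ¬ 3 ∣ 2) (by rw [← hnorm, hdet, norm_pow])
  refine ⟨M * A₀ * M⁻¹, by rw [det_conj hMunit, hA₀, cubicCompanion_map, det_cubicCompanion], ?_,
    fun ⟨S₁, S₂, h₁, h₂, hd₁, _, hA⟩ => hnonconj ⟨S₁⁻¹, by simp [hd₁],
      hA ▸ inv_mul_mul_self_eq_transpose_of_symm h₁ h₂ (hd₁ ▸ isUnit_one)⟩, hnonconj⟩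
  rw [charpoly_conj hMunit]
  exact PadicInt.irreducible_charpoly_map_coe hirr

/-- For `p` an odd prime, there exists `A ∈ SL(3,ℚ_p)` with
irreducible characteristic polynomial which is not a product of two symmetric
matrices in `SL(3,ℚ_p)`; in particular `A` is not conjugate to `ᵗA` by any element
of `SL(3,ℚ_p)`. -/
theorem stmt14 (p : ℕ) [Fact p.Prime] (hodd : Odd p) :
    ∃ A : Matrix (Fin 3) (Fin 3) ℚ_[p], A.det = 1 ∧ Irreducible A.charpoly ∧
      (¬ ∃ S₁ S₂ : Matrix (Fin 3) (Fin 3) ℚ_[p],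
        S₁ᵀ = S₁ ∧ S₂ᵀ = S₂ ∧ S₁.det = 1 ∧ S₂.det = 1 ∧ A = S₁ * S₂) ∧
      (¬ ∃ C : Matrix (Fin 3) (Fin 3) ℚ_[p], C.det = 1 ∧ C * A * C⁻¹ = Aᵀ) :=
  stmt14_general p
end

section
/- There exists a matrix A ∈ SL(3,ℚ) whose characteristic polynomial is X³ − 3X − 1 (which is irreducible over ℚ) and which is not a product of two symmetric matrices belonging to SL(3,ℚ); in particular, A is not conjugate to its transpose ᵗA by any element of SL(3,ℚ). -/
open Matrix Polynomial

/-!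
Let `K = ℚ(θ)` with `θ³ = 3θ + 1` and `π = θ - 1`, so `π³ + 3π² = 3`: the prime `3` is totally
ramified in `ℤ[π]`, with uniformizer `π` of norm `3`. The matrices `C` with
`C matA = matAᵀ C` are the symmetric matrices `intertwiner x y z`, and
`4 · det (intertwiner x y z)` is the norm of an element of `K` depending linearly on `x, y, z`.
So it suffices that `4 v³` is not a norm for rational `v ≠ 0`, and after clearing denominators
for integral `v`. Modulo `9`, `N(α) = 4 v³` forces `3 ∣ v`, and `π ∣ α` whenever `3 ∣ N(α)`;
so `α / π³` has norm `4 (v / 3)³`, an infinite descent. Finally `S₁ S₂` with `S₁, S₂` symmetric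
is conjugate to its transpose by `S₂`.
-/

section NormForm

variable {R : Type*} [CommRing R]

/-- `N(a + bπ + cπ²)`, the norm from `K` written in the basis `1, π, π²`. -/
def normForm (a b c : R) : R :=
  a ^ 3 + 3 * b ^ 3 + 9 * c ^ 3 - 3 * a ^ 2 * b + 9 * a ^ 2 * c - 9 * a * b * c + 18 * a * c ^ 2
    - 9 * b ^ 2 * c

lemma normForm_mul (t a b c : R) :
    normForm (t * a) (t * b) (t * c) = t ^ 3 * normForm a b c := by
  unfold normForm; ring

/-- `3a + bπ + cπ² = π · (b + (c + 3a)π + aπ²)` and `N(π) = 3`. -/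
lemma normForm_three_mul (a b c : R) :
    normForm (3 * a) b c = 3 * normForm b (c + 3 * a) a := by
  unfold normForm; ring

@[norm_cast]
lemma intCast_normForm (a b c : ℤ) : ((normForm a b c : ℤ) : R) = normForm (a : R) b c := by
  push_cast [normForm]; rfl

end NormForm

lemma three_dvd_of_three_dvd_normForm {a b c : ℤ} (h : 3 ∣ normForm a b c) : 3 ∣ a := by
  have hmod : normForm a b c = a ^ 3 + 3 * (b ^ 3 + 3 * c ^ 3 - a ^ 2 * b + 3 * a ^ 2 * c
      - 3 * a * b * c + 6 * a * c ^ 2 - 3 * b ^ 2 * c) := by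
    unfold normForm; ring
  rw [hmod] at h
  exact Int.prime_three.dvd_of_dvd_pow ((dvd_add_left (dvd_mul_right 3 _)).1 h)

lemma exists_normForm_eq_of_normForm_eq_three_mul {a b c m : ℤ} (h : normForm a b c = 3 * m) :
    ∃ a' b' c', normForm a' b' c' = m := by
  obtain ⟨a', rfl⟩ := three_dvd_of_three_dvd_normForm (Dvd.intro m h.symm)
  rw [normForm_three_mul] at h
  exact ⟨b, c + 3 * a', a', by omega⟩

lemma three_dvd_of_normForm_eq_four_mul_cube {a b c v : ℤ} (h : normForm a b c = 4 * v ^ 3) :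
    3 ∣ v := by
  have mod_nine : ∀ a b v : ZMod 9, normForm a b 0 = 4 * v ^ 3 → 3 * v = 0 := by
    unfold normForm; decide
  have h9 : normForm (a : ZMod 9) b 0 = 4 * (v : ZMod 9) ^ 3 := by
    have h9 := congrArg (Int.cast : ℤ → ZMod 9) h
    have nine : (9 : ZMod 9) = 0 := rfl
    push_cast [normForm] at h9 ⊢
    linear_combination
      h9 - (c ^ 3 + a ^ 2 * c - a * b * c + 2 * a * c ^ 2 - b ^ 2 * c : ZMod 9) * nine
  have h3v : ((3 * v : ℤ) : ZMod 9) = 0 := by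
    push_cast
    exact mod_nine a b v h9
  have := (ZMod.intCast_zmod_eq_zero_iff_dvd _ 9).1 h3v
  omega

theorem Int.eq_zero_of_normForm_eq_four_mul_cube {a b c v : ℤ} (h : normForm a b c = 4 * v ^ 3) :
    v = 0 := by
  obtain ⟨w, rfl⟩ := three_dvd_of_normForm_eq_four_mul_cube h
  obtain ⟨a₁, b₁, c₁, h₁⟩ := exists_normForm_eq_of_normForm_eq_three_mul (m := 36 * w ^ 3)
    (by rw [h]; ring)
  obtain ⟨a₂, b₂, c₂, h₂⟩ := exists_normForm_eq_of_normForm_eq_three_mul (m := 12 * w ^ 3)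
    (by rw [h₁]; ring)
  obtain ⟨a₃, b₃, c₃, h₃⟩ := exists_normForm_eq_of_normForm_eq_three_mul (m := 4 * w ^ 3)
    (by rw [h₂]; ring)
  by_contra hv
  have hw : w ≠ 0 := by rintro rfl; simp at hv
  exact hw (eq_zero_of_normForm_eq_four_mul_cube h₃)
termination_by v.natAbs
decreasing_by omega

theorem Rat.eq_zero_of_normForm_eq_four_mul_cube {a b c v : ℚ} (h : normForm a b c = 4 * v ^ 3) :
    v = 0 := by
  set d : ℤ := a.den * b.den * c.den * v.den
  have hd : (d : ℚ) ≠ 0 := by positivity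
  have integral : ∀ q : ℚ, (q.den : ℤ) ∣ d → ∃ n : ℤ, (n : ℚ) = d * q := by
    rintro q ⟨k, hk⟩
    exact ⟨q.num * k, by rw [hk]; push_cast; rw [← q.den_mul_eq_num]; ring⟩
  obtain ⟨A, hA⟩ := integral a ⟨b.den * c.den * v.den, by ring⟩
  obtain ⟨B, hB⟩ := integral b ⟨a.den * c.den * v.den, by ring⟩
  obtain ⟨C, hC⟩ := integral c ⟨a.den * b.den * v.den, by ring⟩
  obtain ⟨V, hV⟩ := integral v (Dvd.intro_left _ rfl)
  have hint : normForm (A : ℚ) B C = 4 * (V : ℚ) ^ 3 := by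
    rw [hA, hB, hC, hV, normForm_mul, h]; ring
  have hV0 : V = 0 :=
    Int.eq_zero_of_normForm_eq_four_mul_cube (a := A) (b := B) (c := C) (by exact_mod_cast hint)
  rw [hV0, Int.cast_zero, eq_comm, mul_eq_zero] at hV
  exact hV.resolve_left hd

lemma irreducible_X_pow_three_sub_three_mul_X_sub_one :
    Irreducible ((X : ℚ[X]) ^ 3 - 3 * X - 1) := by
  have hmonic : ((X : ℤ[X]) ^ 3 - 3 * X - 1).Monic := by monicity!
  have gauss := hmonic.isPrimitive.irreducible_iff_irreducible_map_fraction_map (K := ℚ)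
  simp only [algebraMap_int_eq, Polynomial.map_sub, Polynomial.map_pow, map_X, Polynomial.map_mul,
    Polynomial.map_ofNat, Polynomial.map_one] at gauss
  rw [← gauss]
  refine hmonic.irreducible_of_irreducible_map (Int.castRingHom (ZMod 2)) _ ?_
  simp only [Polynomial.map_sub, Polynomial.map_pow, Polynomial.map_mul, map_X,
    Polynomial.map_ofNat, Polynomial.map_one]
  apply irreducible_of_degree_le_three_of_not_isRoot
  · rw [show natDegree ((X : (ZMod 2)[X]) ^ 3 - 3 * X - 1) = 3 by compute_degree!]
    decide
  · simp only [IsRoot, eval_sub, eval_pow, eval_mul, eval_X, eval_one, eval_ofNat]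
    decide

section Transpose

variable {n R : Type*} [Fintype n] [DecidableEq n] [CommRing R]

lemma Matrix.mul_eq_transpose_mul_of_mul_mul_inv_eq {A C : Matrix n n R} (hC : IsUnit C.det)
    (h : C * A * C⁻¹ = Aᵀ) : C * A = Aᵀ * C := by
  rw [← h]
  exact (nonsing_inv_mul_cancel_right C (C * A) hC).symm

lemma Matrix.mul_mul_mul_inv_eq_transpose {S₁ S₂ : Matrix n n R} (h₁ : S₁ᵀ = S₁) (h₂ : S₂ᵀ = S₂)
    (hS₂ : IsUnit S₂.det) : S₂ * (S₁ * S₂) * S₂⁻¹ = (S₁ * S₂)ᵀ := by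
  rw [transpose_mul, h₁, h₂, ← mul_assoc, mul_nonsing_inv_cancel_right _ _ hS₂]

end Transpose

def matA : Matrix (Fin 3) (Fin 3) ℚ := !![0, 0, 2; 1/2, 0, 3; 0, 1, 0]

lemma det_matA : matA.det = 1 := by
  simp [matA, det_fin_three]

lemma charpoly_matA : matA.charpoly = X ^ 3 - 3 * X - 1 := by
  rw [charpoly, det_fin_three]
  simp [matA, ← C_mul, map_ofNat C 3]
  ring

def intertwiner (x y z : ℚ) : Matrix (Fin 3) (Fin 3) ℚ :=
  !![9/2 * x + 1/4 * y - 3/4 * z, -3 * x + 1/2 * z, x; -3 * x + 1/2 * z, 2 * x, y; x, y, z]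

lemma eq_intertwiner_of_mul_matA_eq {C : Matrix (Fin 3) (Fin 3) ℚ} (h : C * matA = matAᵀ * C) :
    C = intertwiner (C 2 0) (C 2 1) (C 2 2) := by
  have transpose_matA : matAᵀ = !![0, 1/2, 0; 0, 0, 1; 2, 3, 0] := by
    ext i j; fin_cases i <;> fin_cases j <;> rfl
  rw [transpose_matA, matA, eta_fin_three C, mul_fin_three, mul_fin_three] at h
  simp only [EmbeddingLike.apply_eq_iff_eq, vecCons_inj, and_true] at h
  obtain ⟨⟨h00, h01, h02⟩, ⟨h10, h11, h12⟩, h20, h21, -⟩ := h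
  conv_lhs => rw [eta_fin_three C]
  simp only [intertwiner, EmbeddingLike.apply_eq_iff_eq, vecCons_inj, and_true]
  refine ⟨⟨?_, ?_, ?_⟩, ?_, ?_, ?_⟩ <;> linarith

lemma four_mul_det_intertwiner (x y z : ℚ) :
    4 * (intertwiner x y z).det =
      normForm (-62 * x - 4 * y + 11 * z) (46 * x + 3 * y - 8 * z) (28 * x + 2 * y - 5 * z) := by
  simp [intertwiner, det_fin_three, normForm]
  ring

lemma det_ne_one_of_mul_matA_eq {C : Matrix (Fin 3) (Fin 3) ℚ} (h : C * matA = matAᵀ * C) :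
    C.det ≠ 1 := by
  intro hdet
  have hnorm := four_mul_det_intertwiner (C 2 0) (C 2 1) (C 2 2)
  rw [← eq_intertwiner_of_mul_matA_eq h, hdet] at hnorm
  exact one_ne_zero (Rat.eq_zero_of_normForm_eq_four_mul_cube (v := 1) (by rw [← hnorm]; ring))

/-- There exists `A ∈ SL(3,ℚ)` whose characteristic polynomial is
`X³ − 3X − 1` (which is irreducible over `ℚ`) and which is not a product of two
symmetric matrices in `SL(3,ℚ)`; in particular `A` is not conjugate to `ᵗA` by any
element of `SL(3,ℚ)`. -/
theorem stmt15 :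
    Irreducible ((X : ℚ[X]) ^ 3 - 3 * X - 1) ∧
    ∃ A : Matrix (Fin 3) (Fin 3) ℚ, A.det = 1 ∧
      A.charpoly = (X : ℚ[X]) ^ 3 - 3 * X - 1 ∧
      (¬ ∃ S₁ S₂ : Matrix (Fin 3) (Fin 3) ℚ,
        S₁ᵀ = S₁ ∧ S₂ᵀ = S₂ ∧ S₁.det = 1 ∧ S₂.det = 1 ∧ A = S₁ * S₂) ∧
      (¬ ∃ C : Matrix (Fin 3) (Fin 3) ℚ, C.det = 1 ∧ C * A * C⁻¹ = Aᵀ) := by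
  have not_conj : ¬ ∃ C : Matrix (Fin 3) (Fin 3) ℚ, C.det = 1 ∧ C * matA * C⁻¹ = matAᵀ := by
    rintro ⟨C, hdet, hconj⟩
    exact det_ne_one_of_mul_matA_eq
      (mul_eq_transpose_mul_of_mul_mul_inv_eq (hdet ▸ isUnit_one) hconj) hdet
  refine ⟨irreducible_X_pow_three_sub_three_mul_X_sub_one, matA, det_matA, charpoly_matA, ?_,
    not_conj⟩
  rintro ⟨S₁, S₂, h₁, h₂, -, hdet₂, hA⟩
  rw [hA] at not_conj
  exact not_conj ⟨S₂, hdet₂, mul_mul_mul_inv_eq_transpose h₁ h₂ (hdet₂ ▸ isUnit_one)⟩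
end

section
/- Let k be a finite field of characteristic different from 2 and 3 which contains a primitive third root of unity ω, and let b ∈ k^× be such that the polynomial X³ − b² is irreducible over k. Let A be the matrix with rows (ω, −1, 0), (0, ω, 1), (0, 0, ω), let D = diag(b, 1, 1), and set B = D A D^{-1}. Then B ∈ SL(3,k), and B is conjugate neither to B^{-1} nor to its transpose ᵗB by any element of SL(3,k). -/
open Matrix Polynomial

/-- An irreducible cubic has no roots. -/
lemma no_root_of_irred {k : Type*} [Field k] (b : k)
    (hirr : Irreducible ((X : k[X]) ^ 3 - C b)) (r : k) (hr : r ^ 3 = b) : False := by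
  have hroot : IsRoot ((X : k[X]) ^ 3 - C b) r := by
    simp [IsRoot, hr]
  obtain ⟨q, hq⟩ := Polynomial.dvd_iff_isRoot.mpr hroot
  rcases hirr.isUnit_or_isUnit hq with h | h
  · exact Polynomial.not_isUnit_of_natDegree_pos _ (by simp) h
  · have hq0 : q ≠ 0 := fun h0 => by simp [h0] at h
    have hdq : q.natDegree = 0 := Polynomial.natDegree_eq_zero_of_isUnit h
    have hX : (X - C r : k[X]) ≠ 0 := X_sub_C_ne_zero r
    have := Polynomial.natDegree_mul hX hq0
    rw [← hq, Polynomial.natDegree_X_pow_sub_C, Polynomial.natDegree_X_sub_C, hdq] at this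
    omega

/-- Let `k` be a finite field of characteristic ≠ 2, 3 containing a
primitive third root of unity `ω`, and let `b ∈ k^×` with `X³ − b²` irreducible
over `k`. With `A = !![ω,-1,0; 0,ω,1; 0,0,ω]`, `D = diag(b,1,1)` and `B = DAD⁻¹`,
the matrix `B` lies in `SL(3,k)` and is conjugate neither to `B⁻¹` nor to `ᵗB` by
any element of `SL(3,k)`. -/
theorem stmt16 {k : Type*} [Field k] [Fintype k]
    (h2 : (2 : k) ≠ 0) (h3 : (3 : k) ≠ 0)
    (ω : k) (hω3 : ω ^ 3 = 1) (hω1 : ω ≠ 1)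
    (b : k) (hb : b ≠ 0)
    (hirr : Irreducible ((X : k[X]) ^ 3 - C (b ^ 2)))
    (A D B : Matrix (Fin 3) (Fin 3) k)
    (hA : A = !![ω, -1, 0; 0, ω, 1; 0, 0, ω])
    (hD : D = Matrix.diagonal ![b, 1, 1])
    (hB : B = D * A * D⁻¹) :
    B.det = 1 ∧
    (¬ ∃ C : Matrix (Fin 3) (Fin 3) k, C.det = 1 ∧ C * B * C⁻¹ = B⁻¹) ∧
    (¬ ∃ C : Matrix (Fin 3) (Fin 3) k, C.det = 1 ∧ C * B * C⁻¹ = Bᵀ) := by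
  have hω0 : ω ≠ 0 := by
    intro h; rw [h] at hω3; simp at hω3
  -- D⁻¹
  have hDinv : D⁻¹ = Matrix.diagonal ![b⁻¹, 1, 1] := by
    apply Matrix.inv_eq_right_inv
    rw [hD]
    ext i j
    fin_cases i <;> fin_cases j <;>
      simp [Matrix.mul_apply, Fin.sum_univ_three, Matrix.diagonal_apply, Matrix.one_apply,
        Matrix.vecHead, Matrix.vecTail, mul_inv_cancel₀ hb]
  -- explicit form of B
  have hBexp : B = !![ω, -b, 0; 0, ω, 1; 0, 0, ω] := by
    rw [hB, hDinv, hD, hA]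
    ext i j
    fin_cases i <;> fin_cases j <;>
      (simp [Matrix.mul_apply, Fin.sum_univ_three, Matrix.diagonal_apply, Matrix.vecHead,
        Matrix.vecTail]; try field_simp)
  have hdetB : B.det = 1 := by
    rw [hBexp, Matrix.det_fin_three]
    simp [Matrix.vecHead, Matrix.vecTail]
    linear_combination hω3
  refine ⟨hdetB, ?_, ?_⟩
  · -- not conjugate to B⁻¹ : compare traces
    rintro ⟨C, hC1, hCB⟩
    have hCinv : C⁻¹ * C = 1 :=
      Matrix.nonsing_inv_mul C (by rw [hC1]; exact isUnit_one)
    have hBinv : B⁻¹ = !![ω ^ 2, ω * b, -b; 0, ω ^ 2, -ω; 0, 0, ω ^ 2] := by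
      apply Matrix.inv_eq_right_inv
      rw [hBexp]
      ext i j
      fin_cases i <;> fin_cases j <;>
        simp [Matrix.mul_apply, Fin.sum_univ_three, Matrix.one_apply, Matrix.vecHead,
          Matrix.vecTail] <;>
        (first | ring1 | linear_combination hω3 | linear_combination -hω3 |
          linear_combination b * hω3 | linear_combination (-b) * hω3)
    have htr : (B⁻¹).trace = B.trace := by
      rw [← hCB, Matrix.trace_mul_comm (C * B) C⁻¹, ← Matrix.mul_assoc, hCinv,
        Matrix.one_mul]
    rw [hBinv, hBexp] at htr
    simp [Matrix.trace, Fin.sum_univ_three, Matrix.diag, Matrix.vecHead, Matrix.vecTail] at htr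
    -- 3 ω² = 3 ω hence ω = 1
    have h1 : (3 : k) * (ω * (ω - 1)) = 0 := by linear_combination htr
    rcases mul_eq_zero.mp h1 with h | h
    · exact h3 h
    · rcases mul_eq_zero.mp h with h | h
      · exact hω0 h
      · exact hω1 (sub_eq_zero.mp h)
  · -- not conjugate to Bᵀ
    rintro ⟨C, hC1, hCB⟩
    have hCinv : C⁻¹ * C = 1 :=
      Matrix.nonsing_inv_mul C (by rw [hC1]; exact isUnit_one)
    have hmul : C * B = Bᵀ * C := by
      calc C * B = C * B * C⁻¹ * C := by rw [Matrix.mul_assoc (C * B), hCinv, Matrix.mul_one]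
      _ = Bᵀ * C := by rw [hCB]
    have hT : (!![ω, -b, 0; 0, ω, 1; 0, 0, ω] : Matrix (Fin 3) (Fin 3) k)ᵀ
        = !![ω, 0, 0; -b, ω, 0; 0, 1, ω] := by
      ext i j
      fin_cases i <;> fin_cases j <;> simp [Matrix.vecHead, Matrix.vecTail]
    rw [hBexp, hT] at hmul
    -- entry equations
    have e01 := congrFun (congrFun hmul 0) 1
    have e02 := congrFun (congrFun hmul 0) 2
    have e11 := congrFun (congrFun hmul 1) 1
    have e12 := congrFun (congrFun hmul 1) 2
    have e21 := congrFun (congrFun hmul 2) 1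
    simp [Matrix.mul_apply, Fin.sum_univ_three, Matrix.vecHead, Matrix.vecTail]
      at e01 e02 e11 e12 e21
    -- derive structure of C
    have hc00 : C 0 0 = 0 := by
      have h' : -b * C 0 0 = 0 := by linear_combination e01
      rcases mul_eq_zero.mp h' with h | h
      · exact absurd (neg_eq_zero.mp h) hb
      · exact h
    have hc01 : C 0 1 = 0 := by linear_combination e02
    have hc10 : C 1 0 = 0 := by
      have h' : -b * C 1 0 = -b * C 0 1 := by linear_combination e11
      rw [hc01, mul_zero] at h'
      rcases mul_eq_zero.mp h' with h | h
      · exact absurd (neg_eq_zero.mp h) hb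
      · exact h
    have hc11 : C 1 1 = -b * C 0 2 := by linear_combination e12
    have hc20 : C 2 0 = C 0 2 := by
      have h' : -b * C 2 0 = C 1 1 := by linear_combination e21
      rw [hc11] at h'
      have h'' : b * (C 2 0 - C 0 2) = 0 := by linear_combination -h'
      rcases mul_eq_zero.mp h'' with h | h
      · exact absurd h hb
      · exact sub_eq_zero.mp h
    -- determinant
    have hdet : b * C 0 2 ^ 3 = 1 := by
      rw [Matrix.det_fin_three, hc00, hc01, hc10, hc11, hc20] at hC1
      linear_combination hC1
    have hc02 : C 0 2 ≠ 0 := by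
      intro h; rw [h] at hdet; simp at hdet
    -- b² is a cube: contradiction with irreducibility
    have h6 : b ^ 2 * C 0 2 ^ 6 = 1 := by
      linear_combination (b * C 0 2 ^ 3 + 1) * hdet
    have hr : ((C 0 2) ^ 2)⁻¹ ^ 3 = b ^ 2 := by
      field_simp
      linear_combination -h6
    exact no_root_of_irred (b ^ 2) hirr _ hr
end
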